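/- arXiv:2604.16046 — 5 statements merged into one kernel-verified Lean document; each statement's English description precedes it below -/
import Mathlib

section
/- For the cycle C_n on n ≥ 3 vertices, the 2-rainbow separation number satisfies c_2(C_n) = 2⌈n/2⌉. -/
open SimpleGraph
open scoped Fin.NatCast Fin.CommRing

/-- A path in a graph `G`: a walk that is a path, with its endpoints. -/
structure GPath {V : Type*} (G : SimpleGraph V) where
  a : V
  b : V
  walk : G.Walk a b
  isPath : walk.IsPath

/-- `P` is a `k`-rainbow separating path system of `G`: every pair of distinct
edges is separated by two paths of distinct colors. -/
def IsRSPS {V : Type*} (G : SimpleGraph V) (k : ℕ)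
    (P : Multiset (GPath G × Fin k)) : Prop :=
  ∀ e f : Sym2 V, e ∈ G.edgeSet → f ∈ G.edgeSet → e ≠ f →
    ∃ p ∈ P, ∃ q ∈ P, p.2 ≠ q.2 ∧
      e ∈ p.1.walk.edges ∧ f ∉ p.1.walk.edges ∧
      f ∈ q.1.walk.edges ∧ e ∉ q.1.walk.edges

/-- The `k`-rainbow separation number `c_k(G)`. -/
noncomputable def cRSPS {V : Type*} (G : SimpleGraph V) (k : ℕ) : ℕ :=
  sInf {m | ∃ P : Multiset (GPath G × Fin k), IsRSPS G k P ∧ Multiset.card P = m}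

/-- `P` is a weakly separating path system of `G`. -/
def IsWeakSep {V : Type*} (G : SimpleGraph V) (P : Multiset (GPath G)) : Prop :=
  ∀ e f : Sym2 V, e ∈ G.edgeSet → f ∈ G.edgeSet → e ≠ f →
    ∃ p ∈ P, (e ∈ p.walk.edges ∧ f ∉ p.walk.edges) ∨
      (f ∈ p.walk.edges ∧ e ∉ p.walk.edges)

/-- The weak separation number `wsp(G)`. -/
noncomputable def wsp {V : Type*} (G : SimpleGraph V) : ℕ :=
  sInf {m | ∃ P : Multiset (GPath G), IsWeakSep G P ∧ Multiset.card P = m}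

/-- `P` is a strongly separating path system of `G`. -/
def IsStrongSep {V : Type*} (G : SimpleGraph V) (P : Multiset (GPath G)) : Prop :=
  ∀ e f : Sym2 V, e ∈ G.edgeSet → f ∈ G.edgeSet → e ≠ f →
    ∃ p ∈ P, e ∈ p.walk.edges ∧ f ∉ p.walk.edges

/-- The strong separation number `ssp(G)`. -/
noncomputable def ssp {V : Type*} (G : SimpleGraph V) : ℕ :=
  sInf {m | ∃ P : Multiset (GPath G), IsStrongSep G P ∧ Multiset.card P = m}


section Cyc
variable {n : ℕ} [NeZero n]

/-- The edge from `v` to `v+1` in the cycle. -/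
def Ed (v : Fin n) : Sym2 (Fin n) := s(v, v + 1)

lemma val_cast (k : ℕ) : ((k : Fin n)).val = k % n := Fin.val_natCast k n

lemma vadd (v : Fin n) (k : ℕ) : (v + (k : Fin n)).val = (v.val + k) % n := by
  rw [Fin.val_add, val_cast, Nat.add_mod, Nat.mod_mod_of_dvd _ dvd_rfl, ← Nat.add_mod]

lemma val_one_c (hn : 3 ≤ n) : ((1 : Fin n)).val = 1 := by
  rw [Fin.val_one']; exact Nat.mod_eq_of_lt (by omega)

lemma cyc_cast_ne_zero (hn : 3 ≤ n) {k : ℕ} (h1 : 1 ≤ k) (h2 : k < n) : ((k : Fin n)) ≠ 0 := by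
  intro h
  have h' := congrArg Fin.val h
  rw [val_cast, Nat.mod_eq_of_lt h2, Fin.val_zero] at h'
  omega

lemma adj_succ (hn : 3 ≤ n) (v : Fin n) : (cycleGraph n).Adj v (v + 1) := by
  rw [cycleGraph_adj']
  right
  simp only [add_sub_cancel_left]
  exact val_one_c hn

lemma Ed_inj (hn : 3 ≤ n) {v w : Fin n} (h : Ed v = Ed w) : v = w := by
  rw [Ed, Ed, Sym2.eq_iff] at h
  rcases h with ⟨h1, _⟩ | ⟨h1, h2⟩
  · exact h1
  · exfalso
    rw [h1] at h2
    apply cyc_cast_ne_zero hn (k := 2) (by omega) (by omega)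
    have h2' : w + 2 = w + 0 := by rw [add_zero]; linear_combination h2
    have h2'' := add_left_cancel h2'
    rw [← h2'']; push_cast; ring

lemma edge_form (hn : 3 ≤ n) {e : Sym2 (Fin n)} (he : e ∈ (cycleGraph n).edgeSet) :
    ∃ v, e = Ed v := by
  induction e with
  | _ x y =>
    rw [mem_edgeSet, cycleGraph_adj'] at he
    rcases he with h | h
    · refine ⟨y, ?_⟩
      have hx : x = y + 1 := by
        have h1 : x - y = 1 := by
          apply Fin.val_injective
          rw [h, val_one_c hn]
        linear_combination h1
      rw [Ed, hx, Sym2.eq_swap]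
    · refine ⟨x, ?_⟩
      have hy : y = x + 1 := by
        have h1 : y - x = 1 := by
          apply Fin.val_injective
          rw [h, val_one_c hn]
        linear_combination h1
      rw [Ed, hy]

/-- The two edges at a vertex. -/
lemma edge_at (hn : 3 ≤ n) {e : Sym2 (Fin n)} (he : e ∈ (cycleGraph n).edgeSet)
    {x : Fin n} (hx : x ∈ e) : e = Ed x ∨ e = Ed (x - 1) := by
  obtain ⟨v, rfl⟩ := edge_form hn he
  rw [Ed, Sym2.mem_iff] at hx
  rcases hx with rfl | rfl
  · exact Or.inl rfl
  · right
    rw [Ed, Ed]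
    have h1 : v + 1 - 1 = v := by ring
    rw [h1]

lemma Ed_mem (hn : 3 ≤ n) (v : Fin n) : Ed v ∈ (cycleGraph n).edgeSet := adj_succ hn v

lemma Ed_mem_iff (v x : Fin n) : x ∈ Ed v ↔ x = v ∨ x = v + 1 := by
  rw [Ed, Sym2.mem_iff]

end Cyc

section Arc
variable {n : ℕ} [NeZero n]

lemma mod_two_cases {a : ℕ} (ha : a < 2 * n) :
    a % n = a ∧ a < n ∨ (a % n = a - n ∧ n ≤ a) := by
  rcases lt_or_ge a n with h | h
  · exact Or.inl ⟨Nat.mod_eq_of_lt h, h⟩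
  · right
    refine ⟨?_, h⟩
    rw [Nat.mod_eq_sub_mod h, Nat.mod_eq_of_lt (by omega)]

def arcWalk (hn : 3 ≤ n) (v : Fin n) : (ℓ : ℕ) → (cycleGraph n).Walk v (v + (ℓ : Fin n))
  | 0 => Walk.nil.copy rfl (by push_cast; ring)
  | ℓ + 1 => ((arcWalk hn v ℓ).concat (adj_succ hn _)).copy rfl (by push_cast; ring)

lemma arcWalk_edges (hn : 3 ≤ n) (v : Fin n) (ℓ : ℕ) :
    (arcWalk hn v ℓ).edges = (List.range ℓ).map (fun k : ℕ => Ed (v + (k : Fin n))) := by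
  induction ℓ with
  | zero => simp [arcWalk]
  | succ ℓ ih =>
    rw [arcWalk, Walk.edges_copy, Walk.edges_concat, ih, List.range_succ, List.map_append]
    simp [Ed]

lemma arcWalk_support (hn : 3 ≤ n) (v : Fin n) (ℓ : ℕ) :
    (arcWalk hn v ℓ).support = (List.range (ℓ + 1)).map (fun k : ℕ => v + (k : Fin n)) := by
  induction ℓ with
  | zero => simp [arcWalk, List.range_succ]
  | succ ℓ ih =>
    rw [arcWalk, Walk.support_copy, Walk.support_concat, ih, List.range_succ (n := ℓ + 1),
      List.map_append]
    simp only [List.map_cons, List.map_nil, List.concat_eq_append, List.append_cancel_left_eq,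
      List.cons.injEq, and_true]
    push_cast
    ring

lemma arcWalk_isPath (hn : 3 ≤ n) (v : Fin n) {ℓ : ℕ} (hℓ : ℓ < n) :
    (arcWalk hn v ℓ).IsPath := by
  rw [Walk.isPath_def, arcWalk_support]
  refine List.Nodup.map_on ?_ List.nodup_range
  intro x hx y hy hxy
  rw [List.mem_range] at hx hy
  have h := congrArg Fin.val hxy
  have hv := v.isLt
  rw [vadd, vadd] at h
  rcases mod_two_cases (n := n) (a := v.val + x) (by omega) with ⟨e1, e2⟩ | ⟨e1, e2⟩ <;>
    rcases mod_two_cases (n := n) (a := v.val + y) (by omega) with ⟨f1, f2⟩ | ⟨f1, f2⟩ <;>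
      rw [e1, f1] at h <;> omega

lemma Ed_mem_arcWalk_iff (hn : 3 ≤ n) (v x : Fin n) (ℓ : ℕ) :
    Ed x ∈ (arcWalk hn v ℓ).edges ↔ ∃ k < ℓ, x = v + (k : Fin n) := by
  rw [arcWalk_edges, List.mem_map]
  constructor
  · rintro ⟨k, hk, he⟩
    exact ⟨k, List.mem_range.mp hk, (Ed_inj hn he).symm⟩
  · rintro ⟨k, hk, he⟩
    exact ⟨k, List.mem_range.mpr hk, by rw [he]⟩

end Arc
section Upper
variable {n : ℕ} [NeZero n]

/-- The arc of length `⌈n/2⌉` starting at `i`, as a GPath. -/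
def Apath (hn : 3 ≤ n) (i : Fin n) : GPath (cycleGraph n) :=
  ⟨i, i + (((n + 1) / 2 : ℕ) : Fin n), arcWalk hn i ((n + 1) / 2),
    arcWalk_isPath hn i (by omega)⟩

lemma Apath_edge_iff (hn : 3 ≤ n) (i x : Fin n) :
    Ed x ∈ (Apath hn i).walk.edges ↔ ∃ k < (n + 1) / 2, x = i + (k : Fin n) :=
  Ed_mem_arcWalk_iff hn i x _

lemma cast_add_cancel (hn : 3 ≤ n) {a : Fin n} {s t : ℕ} (hs : s < n) (ht : t < n)
    (h : a + (s : Fin n) = a + (t : Fin n)) : s = t := by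
  have h2 := congrArg Fin.val (add_left_cancel h)
  rw [val_cast, val_cast, Nat.mod_eq_of_lt hs, Nat.mod_eq_of_lt ht] at h2
  exact h2

lemma mem1 (hn : 3 ≤ n) (a : Fin n) : Ed a ∈ (Apath hn a).walk.edges := by
  rw [Apath_edge_iff hn]
  exact ⟨0, by omega, by simp⟩

lemma mem2 (hn : 3 ≤ n) (a : Fin n) {t : ℕ} (ht1 : (n + 1) / 2 ≤ t) (ht2 : t < n) :
    Ed (a + (t : Fin n)) ∉ (Apath hn a).walk.edges := by
  rw [Apath_edge_iff hn]
  rintro ⟨k, hk, hak⟩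
  have := cast_add_cancel hn ht2 (by omega) hak
  omega

lemma mem3 (hn : 3 ≤ n) (a : Fin n) {t : ℕ} (ht1 : (n + 1) / 2 ≤ t) (ht2 : t < n) :
    Ed (a + (t : Fin n)) ∈ (Apath hn (a + ((n - (n + 1) / 2 : ℕ) : Fin n))).walk.edges := by
  rw [Apath_edge_iff hn]
  refine ⟨t - (n - (n + 1) / 2), by omega, ?_⟩
  rw [add_assoc, ← Nat.cast_add]
  congr 2
  omega

lemma mem4 (hn : 3 ≤ n) (a : Fin n) :
    Ed a ∉ (Apath hn (a + ((n - (n + 1) / 2 : ℕ) : Fin n))).walk.edges := by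
  rw [Apath_edge_iff hn]
  rintro ⟨k, hk, hak⟩
  rw [add_assoc, ← Nat.cast_add] at hak
  have h0 : a + ((n - (n + 1) / 2 + k : ℕ) : Fin n) = a + 0 := by rw [add_zero]; exact hak.symm
  have h1 := add_left_cancel h0
  exact cyc_cast_ne_zero hn (by omega) (by omega) h1

/-- The coloring. -/
def ccol (n : ℕ) (i : Fin n) : Fin 2 := if i.val < (n + 1) / 2 then 0 else 1

lemma ccol_flip (hn : 3 ≤ n) (a : Fin n) (h : n % 2 = 0 ∨ a.val ≠ 0) :
    ccol n a ≠ ccol n (a + ((n - (n + 1) / 2 : ℕ) : Fin n)) := by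
  have hx := a.isLt
  have hv : (a + ((n - (n + 1) / 2 : ℕ) : Fin n)).val = (a.val + (n - (n + 1) / 2)) % n :=
    vadd a _
  have key : (a.val < (n + 1) / 2) ↔ ¬((a + ((n - (n + 1) / 2 : ℕ) : Fin n)).val < (n + 1) / 2) := by
    rw [hv]
    rcases mod_two_cases (n := n) (a := a.val + (n - (n + 1) / 2)) (by omega) with ⟨e1, e2⟩ | ⟨e1, e2⟩ <;>
      rw [e1] <;> omega
  rw [ccol, ccol]
  rcases Classical.em (a.val < (n + 1) / 2) with hc | hc
  · rw [if_pos hc, if_neg (key.mp hc)]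
    decide
  · rw [if_neg hc, if_pos (by by_contra hq; exact hc (key.mpr hq))]
    decide

/-- The upper bound path system. -/
noncomputable def Pup (hn : 3 ≤ n) : Multiset (GPath (cycleGraph n) × Fin 2) :=
  (Finset.univ.val.map (fun i : Fin n => (Apath hn i, ccol n i))) +
    (if n % 2 = 1 then {(Apath hn 0, 1)} else 0)

lemma Pup_card (hn : 3 ≤ n) : Multiset.card (Pup hn) = 2 * ((n + 1) / 2) := by
  have hbase : Multiset.card (Finset.univ.val.map (fun i : Fin n => (Apath hn i, ccol n i))) = n := by
    rw [Multiset.card_map]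
    exact Finset.card_univ.trans (Fintype.card_fin n)
  rw [Pup]
  rcases Nat.even_or_odd n with he | ho
  · have h0 : n % 2 = 0 := Nat.even_iff.mp he
    rw [if_neg (by omega), Multiset.card_add, hbase, Multiset.card_zero]
    omega
  · have h1 : n % 2 = 1 := Nat.odd_iff.mp ho
    rw [if_pos h1, Multiset.card_add, hbase]
    rw [Multiset.card_singleton]
    omega

end Upper
section Upper2
variable {n : ℕ} [NeZero n]

lemma Apath_mem_Pup (hn : 3 ≤ n) (i : Fin n) : (Apath hn i, ccol n i) ∈ Pup hn := by
  rw [Pup, Multiset.mem_add]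
  left
  rw [Multiset.mem_map]
  exact ⟨i, Finset.mem_val.mpr (Finset.mem_univ i), rfl⟩

lemma joker_mem_Pup (hn : 3 ≤ n) (h1 : n % 2 = 1) : (Apath hn 0, (1 : Fin 2)) ∈ Pup hn := by
  rw [Pup, Multiset.mem_add]
  right
  rw [if_pos h1, Multiset.mem_singleton]

lemma sep_core (hn : 3 ≤ n) (a : Fin n) {t : ℕ} (ht1 : (n + 1) / 2 ≤ t) (ht2 : t < n) :
    ∃ p ∈ Pup hn, ∃ q ∈ Pup hn, p.2 ≠ q.2 ∧
      Ed a ∈ p.1.walk.edges ∧ Ed (a + (t : Fin n)) ∉ p.1.walk.edges ∧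
      Ed (a + (t : Fin n)) ∈ q.1.walk.edges ∧ Ed a ∉ q.1.walk.edges := by
  set j := a + ((n - (n + 1) / 2 : ℕ) : Fin n) with hj
  by_cases hc : n % 2 = 0 ∨ a.val ≠ 0
  · exact ⟨(Apath hn a, ccol n a), Apath_mem_Pup hn a, (Apath hn j, ccol n j),
      Apath_mem_Pup hn j, ccol_flip hn a hc, mem1 hn a, mem2 hn a ht1 ht2,
      mem3 hn a ht1 ht2, mem4 hn a⟩
  · push_neg at hc
    obtain ⟨hodd, ha0⟩ := hc
    have haz : a = 0 := by
      apply Fin.val_injective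
      rw [ha0, Fin.val_zero]
    have hcj : ccol n j = 0 := by
      rw [ccol, if_pos]
      rw [hj, vadd, ha0, Nat.zero_add, Nat.mod_eq_of_lt (by omega)]
      omega
    refine ⟨(Apath hn a, 1), ?_, (Apath hn j, ccol n j), Apath_mem_Pup hn j, ?_,
      mem1 hn a, mem2 hn a ht1 ht2, mem3 hn a ht1 ht2, mem4 hn a⟩
    · rw [haz]; exact joker_mem_Pup hn (by omega)
    · rw [hcj]; exact one_ne_zero

lemma upper_RSPS (hn : 3 ≤ n) : IsRSPS (cycleGraph n) 2 (Pup hn) := by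
  intro e f he hf hef
  obtain ⟨a, rfl⟩ := edge_form hn he
  obtain ⟨b, rfl⟩ := edge_form hn hf
  have hab : a ≠ b := fun h => hef (by rw [h])
  set t := (b - a).val with htdef
  have hbt : b = a + (t : Fin n) := by rw [htdef, Fin.cast_val_eq_self]; ring
  have ht0 : t ≠ 0 := by
    intro h
    apply hab
    have : b - a = 0 := by apply Fin.val_injective; rw [← htdef, h, Fin.val_zero]
    linear_combination -this
  have htn : t < n := Fin.is_lt _
  rcases le_or_gt ((n + 1) / 2) t with h | h
  · rw [hbt]
    exact sep_core hn a h htn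
  · set t' := (a - b).val with ht'def
    have ht'0 : t' ≠ 0 := by
      intro h2
      apply hab
      have : a - b = 0 := by apply Fin.val_injective; rw [← ht'def, h2, Fin.val_zero]
      linear_combination this
    have ht'n : t' < n := Fin.is_lt _
    have hsum : t + t' = n := by
      have h0 : ((b - a) + (a - b)) = (0 : Fin n) := by ring
      have h1 := congrArg Fin.val h0
      rw [Fin.val_add, ← htdef, ← ht'def, Fin.val_zero] at h1
      rcases mod_two_cases (n := n) (a := t + t') (by omega) with ⟨e1, e2⟩ | ⟨e1, e2⟩ <;>
        rw [e1] at h1 <;> omega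
    have hat : a = b + (t' : Fin n) := by rw [ht'def, Fin.cast_val_eq_self]; ring
    obtain ⟨p, hp, q, hq, hpq, h1, h2, h3, h4⟩ := sep_core hn b (t := t') (by omega) ht'n
    rw [← hat] at h2 h3
    exact ⟨q, hq, p, hp, hpq.symm, h3, h4, h1, h2⟩

lemma upper_bound (hn : 3 ≤ n) :
    ∃ P : Multiset (GPath (cycleGraph n) × Fin 2), IsRSPS (cycleGraph n) 2 P ∧
      Multiset.card P = 2 * ((n + 1) / 2) :=
  ⟨Pup hn, upper_RSPS hn, Pup_card hn⟩

end Upper2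
section Lower1
variable {n : ℕ} [NeZero n]

lemma Ed_ne (hn : 3 ≤ n) {v w : Fin n} (h : v ≠ w) : Ed v ≠ Ed w := fun he => h (Ed_inj hn he)

lemma fin_shift_ne (hn : 3 ≤ n) (a : Fin n) {s t : ℕ} (hs : s < n) (ht : t < n) (hst : s ≠ t) :
    a + (s : Fin n) ≠ a + (t : Fin n) := fun h => hst (cast_add_cancel hn hs ht h)

lemma add_one_ne (hn : 3 ≤ n) (a : Fin n) : a + 1 ≠ a := by
  have := fin_shift_ne hn a (s := 1) (t := 0) (by omega) (by omega) (by omega)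
  simpa using this

lemma sub_one_ne (hn : 3 ≤ n) (a : Fin n) : a - 1 ≠ a := by
  intro h
  exact add_one_ne hn (a - 1) (by rw [h]; linear_combination -h)

lemma sub_two_ne (hn : 3 ≤ n) (a : Fin n) : a - 2 ≠ a - 1 := by
  intro h
  have : a - 1 - 1 = a - 1 := by linear_combination h
  exact sub_one_ne hn (a - 1) this

lemma sub_one_inj {a b : Fin n} (h : a - 1 = b - 1) : a = b := by linear_combination h

lemma mem_Ed_self (v : Fin n) : v ∈ Ed v := by rw [Ed_mem_iff]; left; rfl

lemma mem_Ed_right (v : Fin n) : v + 1 ∈ Ed v := by rw [Ed_mem_iff]; right; rfl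

lemma Ed_sub_one (x : Fin n) : Ed (x - 1) = s(x - 1, x) := by
  rw [Ed]
  congr 1
  ring

lemma adj_cases (hn : 3 ≤ n) {x y : Fin n} (h : (cycleGraph n).Adj x y) :
    y = x + 1 ∨ y = x - 1 := by
  rw [cycleGraph_adj'] at h
  rcases h with h | h
  · right
    have h1 : x - y = 1 := by apply Fin.val_injective; rw [h, val_one_c hn]
    linear_combination -h1
  · left
    have h1 : y - x = 1 := by apply Fin.val_injective; rw [h, val_one_c hn]
    linear_combination h1

lemma not_mem_edges_of_not_mem_support {a b x : Fin n} {w : (cycleGraph n).Walk a b}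
    (hx : x ∉ w.support) {e : Sym2 (Fin n)} (he : e ∈ w.edges) : x ∉ e := by
  intro hxe
  induction e with
  | _ s t =>
    rcases Sym2.mem_iff.mp hxe with rfl | rfl
    · exact hx (w.fst_mem_support_of_mem_edges he)
    · exact hx (w.snd_mem_support_of_mem_edges he)

/-- An internal vertex of a path in the cycle has both of its incident edges on the path. -/
lemma internal_both (hn : 3 ≤ n) {a b : Fin n} (w : (cycleGraph n).Walk a b) (hw : w.IsPath)
    {x : Fin n} (hx : x ∈ w.support) (hxa : x ≠ a) (hxb : x ≠ b) :
    Ed x ∈ w.edges ∧ Ed (x - 1) ∈ w.edges := by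
  induction w with
  | nil =>
    rw [Walk.support_nil, List.mem_singleton] at hx
    exact absurd hx hxa
  | @cons a c b h w' ih =>
    rw [Walk.support_cons, List.mem_cons] at hx
    rcases hx with rfl | hx'
    · exact absurd rfl hxa
    · rw [Walk.cons_isPath_iff] at hw
      obtain ⟨hw', hans⟩ := hw
      by_cases hxc : x = c
      · subst hxc
        cases w' with
        | nil => exact absurd rfl hxb
        | @cons c d b h2 w'' =>
          have hd : d ∈ (Walk.cons h2 w'').support := by
            rw [Walk.support_cons]
            exact List.mem_cons_of_mem _ w''.start_mem_support
          have had : a ≠ d := fun hh => hans (hh ▸ hd)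
          have he1 : s(a, x) ∈ (Walk.cons h (Walk.cons h2 w'')).edges := by
            rw [Walk.edges_cons]; exact List.mem_cons_self
          have he2 : s(x, d) ∈ (Walk.cons h (Walk.cons h2 w'')).edges := by
            rw [Walk.edges_cons, Walk.edges_cons]
            exact List.mem_cons_of_mem _ (List.mem_cons_self)
          rcases adj_cases hn h.symm with ha1 | ha1 <;> rcases adj_cases hn h2 with hd1 | hd1
          · exact absurd (ha1.trans hd1.symm) had
          · refine ⟨?_, ?_⟩
            · have hEd : Ed x = s(a, x) := by rw [Ed, ha1]; exact Sym2.eq_swap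
              rw [hEd]; exact he1
            · have hEd : Ed (x - 1) = s(x, d) := by rw [Ed_sub_one, hd1]; exact Sym2.eq_swap
              rw [hEd]; exact he2
          · refine ⟨?_, ?_⟩
            · have hEd : Ed x = s(x, d) := by rw [Ed, hd1]
              rw [hEd]; exact he2
            · have hEd : Ed (x - 1) = s(a, x) := by rw [Ed_sub_one, ha1]
              rw [hEd]; exact he1
          · exact absurd (ha1.trans hd1.symm) had
      · have := ih hw' hx' hxc hxb
        rw [Walk.edges_cons]
        exact ⟨List.mem_cons_of_mem _ this.1, List.mem_cons_of_mem _ this.2⟩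

end Lower1
section Lower2
variable {n : ℕ} [NeZero n]

lemma ends_ne {a b : Fin n} (w : (cycleGraph n).Walk a b) (hw : w.IsPath)
    (hne : w.edges ≠ []) : a ≠ b := by
  cases w with
  | nil => rw [Walk.edges_nil] at hne; exact absurd rfl hne
  | @cons a c b h w' =>
    rw [Walk.cons_isPath_iff] at hw
    intro hab
    exact hw.2 (hab ▸ w'.end_mem_support)

/-- Orientation of a nontrivial path in the cycle at its two endpoints. -/
lemma path_orient (hn : 3 ≤ n) {a b : Fin n} (w : (cycleGraph n).Walk a b) (hw : w.IsPath)
    (hne : w.edges ≠ []) :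
    (Ed a ∈ w.edges ∧ Ed (b - 1) ∈ w.edges ∧ Ed (a - 1) ∉ w.edges ∧ Ed b ∉ w.edges) ∨
    (Ed (a - 1) ∈ w.edges ∧ Ed b ∈ w.edges ∧ Ed a ∉ w.edges ∧ Ed (b - 1) ∉ w.edges) := by
  induction w with
  | nil => exact absurd rfl hne
  | @cons a c b h w' ih =>
    rw [Walk.cons_isPath_iff] at hw
    obtain ⟨hw', hans⟩ := hw
    have hab : a ≠ b := by
      intro hab
      exact hans (hab ▸ w'.end_mem_support)
    have hnota : ∀ e ∈ w'.edges, a ∉ e := fun e he => not_mem_edges_of_not_mem_support hans he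
    have hhead : s(a, c) ∈ (Walk.cons h w').edges := by
      rw [Walk.edges_cons]; exact List.mem_cons_self
    rcases adj_cases hn h with hc | hc
    · -- c = a + 1 : clockwise start
      left
      have hEda : Ed a ∈ (Walk.cons h w').edges := by
        rw [Ed, ← hc]; exact hhead
      have hEda1 : Ed (a - 1) ∉ (Walk.cons h w').edges := by
        rw [Walk.edges_cons, List.mem_cons]
        rintro (hh | hh)
        · rw [hc] at hh
          exact Ed_ne hn (show a - 1 ≠ a from sub_one_ne hn a) (hh.trans (by rw [Ed]))
        · exact hnota _ hh (by rw [Ed_sub_one]; exact Sym2.mem_mk_right _ _)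
      cases w' with
      | nil =>
        subst hc
        refine ⟨hEda, ?_, hEda1, ?_⟩
        · have : a + 1 - 1 = a := by ring
          rw [this]; exact hEda
        · rw [Walk.edges_cons, Walk.edges_nil]
          rw [List.mem_singleton]
          intro hh
          exact Ed_ne hn (add_one_ne hn a) hh
      | @cons c d b h2 w'' =>
        have hne' : (Walk.cons h2 w'').edges ≠ [] := by simp [Walk.edges_cons]
        rcases ih hw' hne' with ⟨i1, i2, i3, i4⟩ | ⟨i1, i2, i3, i4⟩
        · refine ⟨hEda, ?_, hEda1, ?_⟩
          · rw [Walk.edges_cons]; exact List.mem_cons_of_mem _ i2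
          · rw [Walk.edges_cons, List.mem_cons]
            rintro (hh | hh)
            · have hh2 : Ed b = Ed a := by rw [hh, hc, Ed]
              exact Ed_ne hn hab.symm hh2
            · exact i4 hh
        · exfalso
          exact hnota _ i1 (by rw [Ed_mem_iff]; left; rw [hc]; ring)
    · -- c = a - 1 : counqterclockwise start
      right
      have hEda1 : Ed (a - 1) ∈ (Walk.cons h w').edges := by
        rw [Ed_sub_one, ← hc, Sym2.eq_swap]; exact hhead
      have hEda : Ed a ∉ (Walk.cons h w').edges := by
        rw [Walk.edges_cons, List.mem_cons]
        rintro (hh | hh)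
        · rw [hc] at hh
          exact Ed_ne hn (show a ≠ a - 1 from fun hh2 => sub_one_ne hn a hh2.symm)
            (hh.trans (by rw [Ed_sub_one, Sym2.eq_swap]))
        · exact hnota _ hh (mem_Ed_self a)
      cases w' with
      | nil =>
        subst hc
        refine ⟨hEda1, ?_, hEda, ?_⟩
        · exact hEda1
        · rw [Walk.edges_cons, Walk.edges_nil, List.mem_singleton]
          intro hh
          have hh2 : Ed (a - 1 - 1) = Ed (a - 1) := by rw [hh, Ed_sub_one]; exact Sym2.eq_swap
          exact sub_one_ne hn (a - 1) (Ed_inj hn hh2)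
      | @cons c d b h2 w'' =>
        have hne' : (Walk.cons h2 w'').edges ≠ [] := by simp [Walk.edges_cons]
        rcases ih hw' hne' with ⟨i1, i2, i3, i4⟩ | ⟨i1, i2, i3, i4⟩
        · exfalso
          exact hnota _ i1 (by rw [Ed_mem_iff]; right; rw [hc]; ring)
        · refine ⟨hEda1, ?_, hEda, ?_⟩
          · rw [Walk.edges_cons]; exact List.mem_cons_of_mem _ i2
          · rw [Walk.edges_cons, List.mem_cons]
            rintro (hh | hh)
            · have hh2 : Ed (b - 1) = Ed (a - 1) := by
                rw [hh, hc, Ed_sub_one]; exact Sym2.eq_swap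
              exact hab (sub_one_inj (Ed_inj hn hh2)).symm
            · exact i4 hh
    
end Lower2
section Lower3
variable {n : ℕ} [NeZero n]

lemma endpoint_fwd (hn : 3 ≤ n) {r : GPath (cycleGraph n)} {v : Fin n}
    (h1 : Ed v ∈ r.walk.edges) (h2 : Ed (v + 1) ∉ r.walk.edges) :
    v + 1 = r.a ∨ v + 1 = r.b := by
  by_contra hcon
  push_neg at hcon
  have hsup : v + 1 ∈ r.walk.support := r.walk.snd_mem_support_of_mem_edges h1
  exact h2 (internal_both hn r.walk r.isPath hsup hcon.1 hcon.2).1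

lemma endpoint_bwd (hn : 3 ≤ n) {r : GPath (cycleGraph n)} {v : Fin n}
    (h1 : Ed (v + 1) ∈ r.walk.edges) (h2 : Ed v ∉ r.walk.edges) :
    v + 1 = r.a ∨ v + 1 = r.b := by
  by_contra hcon
  push_neg at hcon
  have hsup : v + 1 ∈ r.walk.support := r.walk.fst_mem_support_of_mem_edges h1
  have hboth := internal_both hn r.walk r.isPath hsup hcon.1 hcon.2
  have he : v + 1 - 1 = v := by ring
  rw [he] at hboth
  exact h2 hboth.2

lemma same_q_inj (hn : 3 ≤ n) {r : GPath (cycleGraph n)} {v v' : Fin n}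
    (h1 : Ed (v + 1) ∈ r.walk.edges) (h2 : Ed v ∉ r.walk.edges)
    (h1' : Ed (v' + 1) ∈ r.walk.edges) (h2' : Ed v' ∉ r.walk.edges) : v = v' := by
  have e := endpoint_bwd hn h1 h2
  have e' := endpoint_bwd hn h1' h2'
  have hor := path_orient hn r.walk r.isPath (List.ne_nil_of_mem h1)
  rcases e with ha | hb <;> rcases e' with ha' | hb'
  · exact add_right_cancel (ha.trans ha'.symm)
  · exfalso
    rcases hor with ⟨_, _, _, hnb⟩ | ⟨_, _, hna, _⟩
    · exact hnb (by rw [hb'] at h1'; exact h1')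
    · exact hna (by rw [ha] at h1; exact h1)
  · exfalso
    rcases hor with ⟨_, _, _, hnb⟩ | ⟨_, _, hna, _⟩
    · exact hnb (by rw [hb] at h1; exact h1)
    · exact hna (by rw [ha'] at h1'; exact h1')
  · exact add_right_cancel (hb.trans hb'.symm)

/-- The other endpoint of the path `q_v`, with its orientation data. -/
lemma other_end (hn : 3 ≤ n) {r : GPath (cycleGraph n)} {v : Fin n}
    (h1 : Ed (v + 1) ∈ r.walk.edges) (h2 : Ed v ∉ r.walk.edges) :
    ∃ w : Fin n, (w = r.a ∨ w = r.b) ∧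
      Ed (w - 1) ∈ r.walk.edges ∧ Ed w ∉ r.walk.edges := by
  have hor := path_orient hn r.walk r.isPath (List.ne_nil_of_mem h1)
  rcases endpoint_bwd hn h1 h2 with ha | hb
  · -- v + 1 = r.a ; other end is r.b
    refine ⟨r.b, Or.inr rfl, ?_⟩
    rcases hor with ⟨_, hb1, _, hb2⟩ | ⟨_, _, hna, _⟩
    · exact ⟨hb1, hb2⟩
    · exact absurd (by rw [ha] at h1; exact h1) hna
  · -- v + 1 = r.b ; other end is r.a
    refine ⟨r.a, Or.inl rfl, ?_⟩
    rcases hor with ⟨_, _, _, hnb⟩ | ⟨ha1, _, ha2, _⟩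
    · exact absurd (by rw [hb] at h1; exact h1) hnb
    · exact ⟨ha1, ha2⟩

/-- The vertex represented by a slot (a colored path together with an end-choice). -/
def slotVtx (z : (GPath (cycleGraph n) × Fin 2) × Bool) : Fin n :=
  if z.2 then z.1.1.a else z.1.1.b

lemma lower_bound (hn : 3 ≤ n) (P : Multiset (GPath (cycleGraph n) × Fin 2))
    (hP : IsRSPS (cycleGraph n) 2 P) : 2 * ((n + 1) / 2) ≤ Multiset.card P := by
  classical
  have hv1 : ∀ v : Fin n, v + 1 ≠ v := fun v => add_one_ne hn v
  have H : ∀ v : Fin n, ∃ p, p ∈ P ∧ ∃ q, q ∈ P ∧ p.2 ≠ q.2 ∧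
      Ed v ∈ p.1.walk.edges ∧ Ed (v + 1) ∉ p.1.walk.edges ∧
      Ed (v + 1) ∈ q.1.walk.edges ∧ Ed v ∉ q.1.walk.edges := by
    intro v
    exact hP (Ed v) (Ed (v + 1)) (Ed_mem hn v) (Ed_mem hn (v + 1))
      (Ed_ne hn (fun h => hv1 v h.symm))
  choose p hp q hq hpq hc1 hc2 hc3 hc4 using H
  set F : Fin n × Bool → (GPath (cycleGraph n) × Fin 2) × Bool :=
    fun z => ((if z.2 then q z.1 else p z.1),
      decide ((if z.2 then q z.1 else p z.1).1.a = z.1 + 1)) with hF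
  have hFvtx : ∀ z, slotVtx (F z) = z.1 + 1 := by
    rintro ⟨v, i⟩
    have ef : v + 1 = (if i then q v else p v).1.a ∨ v + 1 = (if i then q v else p v).1.b := by
      cases i
      · simpa using endpoint_fwd hn (hc1 v) (hc2 v)
      · simpa using endpoint_bwd hn (hc3 v) (hc4 v)
    by_cases hA : (if i then q v else p v).1.a = v + 1
    · simp [slotVtx, hF, hA]
    · have hb : v + 1 = (if i then q v else p v).1.b := ef.resolve_left (fun h => hA h.symm)
      simp [slotVtx, hF, hA, ← hb]
  have hFinj : ∀ z z' : Fin n × Bool, F z = F z' → z = z' := by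
    rintro ⟨v, i⟩ ⟨v', i'⟩ heq
    have hvv : v = v' := by
      have := congrArg slotVtx heq
      rw [hFvtx, hFvtx] at this
      exact add_right_cancel this
    subst hvv
    rcases Bool.eq_false_or_eq_true i with hi | hi <;>
      rcases Bool.eq_false_or_eq_true i' with hi' | hi' <;> subst hi <;> subst hi'
    · rfl
    · exact absurd (show (q v).2 = (p v).2 from congrArg (fun w => w.1.2) heq) (Ne.symm (hpq v))
    · exact absurd (show (p v).2 = (q v).2 from congrArg (fun w => w.1.2) heq) (hpq v)
    · rfl
  have hmem : ∀ z : Fin n × Bool, F z ∈ P.toFinset ×ˢ (Finset.univ : Finset Bool) := by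
    rintro ⟨v, i⟩
    refine Finset.mem_product.mpr ⟨Multiset.mem_toFinset.mpr ?_, Finset.mem_univ _⟩
    cases i
    · simpa [hF] using hp v
    · simpa [hF] using hq v
  have hcard1 : (Finset.univ : Finset (Fin n × Bool)).card ≤
      (P.toFinset ×ˢ (Finset.univ : Finset Bool)).card :=
    Finset.card_le_card_of_injOn F (fun z _ => hmem z) (fun z _ z' _ h => hFinj z z' h)
  have hcu : (Finset.univ : Finset (Fin n × Bool)).card = n * 2 := by
    simp [Fintype.card_prod]
  have hct : (P.toFinset ×ˢ (Finset.univ : Finset Bool)).card = P.toFinset.card * 2 := by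
    simp [Finset.card_product]
  have hn_le : n ≤ Multiset.card P := by
    have h2 := Multiset.toFinset_card_le P
    omega
  rcases Nat.even_or_odd n with he | ho
  · have : n % 2 = 0 := Nat.even_iff.mp he
    omega
  · -- odd case : rule out card P = n
    have hodd : n % 2 = 1 := Nat.odd_iff.mp ho
    rcases Nat.lt_or_ge (Multiset.card P) (n + 1) with hlt | hge
    swap
    · omega
    have hPn : Multiset.card P = n := by omega
    exfalso
    have htf : P.toFinset.card = n := by
      have h2 := Multiset.toFinset_card_le P
      omega
    -- surjectivity of F
    have hsurj := Finset.surj_on_of_inj_on_of_card_le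
      (s := (Finset.univ : Finset (Fin n × Bool)))
      (t := P.toFinset ×ˢ (Finset.univ : Finset Bool))
      (fun z _ => F z) (fun z hz => hmem z) (fun z z' _ _ h => hFinj z z' h)
      (by omega)
    -- build σ
    have Hσ : ∀ v : Fin n, ∃ u : Fin n, p u = q v := by
      intro v
      obtain ⟨w, hw, hw1, hw2⟩ := other_end hn (hc3 v) (hc4 v)
      have hslot : ((q v), decide ((q v).1.a = w)) ∈ P.toFinset ×ˢ (Finset.univ : Finset Bool) :=
        Finset.mem_product.mpr ⟨Multiset.mem_toFinset.mpr (hq v), Finset.mem_univ _⟩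
      obtain ⟨⟨zv, zi⟩, hz, hzeq⟩ := hsurj _ hslot
      have hzeq' : ((q v), decide ((q v).1.a = w)) = F (zv, zi) := hzeq
      have hsv : slotVtx ((q v), decide ((q v).1.a = w)) = w := by
        by_cases hA : (q v).1.a = w
        · simp [slotVtx, hA]
        · have hbw : w = (q v).1.b := hw.resolve_left (fun h => hA h.symm)
          simp [slotVtx, hA, ← hbw]
      have hvtxz : zv + 1 = w := by
        have h0 := congrArg slotVtx hzeq'
        rw [hFvtx, hsv] at h0
        exact h0.symm
      cases zi with
      | false =>
        exact ⟨zv, (congrArg Prod.fst hzeq').symm⟩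
      | true =>
        exfalso
        have h1 : q zv = q v := (congrArg Prod.fst hzeq').symm
        have h2 := hc3 zv
        rw [h1, hvtxz] at h2
        exact hw2 h2
    choose σ hσ using Hσ
    have hflip : ∀ v, (q (σ v)).2 ≠ (q v).2 := by
      intro v
      rw [← hσ v]
      exact (hpq (σ v)).symm
    have hσinj : Function.Injective σ := by
      intro v v' hvv
      have hqq : q v = q v' := by rw [← hσ v, ← hσ v', hvv]
      exact same_q_inj hn (hc3 v) (hc4 v) (hqq ▸ hc3 v') (hqq ▸ hc4 v')
    -- parity argument
    set A := Finset.univ.filter (fun v : Fin n => (q v).2 = 0) with hA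
    set B := Finset.univ.filter (fun v : Fin n => ¬((q v).2 = 0)) with hB
    have hAB : ∀ v ∈ A, σ v ∈ B := by
      intro v hv
      rw [hA, Finset.mem_filter] at hv
      rw [hB, Finset.mem_filter]
      exact ⟨Finset.mem_univ _, fun h => hflip v (h.trans hv.2.symm)⟩
    have hBA : ∀ v ∈ B, σ v ∈ A := by
      intro v hv
      rw [hB, Finset.mem_filter] at hv
      rw [hA, Finset.mem_filter]
      refine ⟨Finset.mem_univ _, ?_⟩
      have h1 : (q v).2 = 1 := by omega
      have h2 := hflip v
      rw [h1] at h2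
      omega
    have hcA : A.card ≤ B.card :=
      Finset.card_le_card_of_injOn σ hAB (fun x _ y _ h => hσinj h)
    have hcB : B.card ≤ A.card :=
      Finset.card_le_card_of_injOn σ hBA (fun x _ y _ h => hσinj h)
    have hsum : A.card + B.card = n := by
      rw [hA, hB]
      rw [Finset.card_filter_add_card_filter_not]
      simp
    omega

end Lower3
/-- For the cycle `C_n` with `n ≥ 3`, `c_2(C_n) = 2⌈n/2⌉`. -/
theorem stmt4 (n : ℕ) (hn : 3 ≤ n) :
    cRSPS (SimpleGraph.cycleGraph n) 2 = 2 * ((n + 1) / 2) := by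
  haveI : NeZero n := ⟨by omega⟩
  rw [cRSPS]
  apply le_antisymm
  · exact Nat.sInf_le ⟨Pup hn, upper_RSPS hn, Pup_card hn⟩
  · have hne : {m | ∃ P : Multiset (GPath (SimpleGraph.cycleGraph n) × Fin 2),
        IsRSPS (SimpleGraph.cycleGraph n) 2 P ∧ Multiset.card P = m}.Nonempty :=
      ⟨2 * ((n + 1) / 2), Pup hn, upper_RSPS hn, Pup_card hn⟩
    apply le_csInf hne
    rintro m ⟨P, hP, rfl⟩
    exact lower_bound hn P hP
end

section
/- In any 2-rainbow separating path system of the cycle C_n, every vertex is the endpoint of at least one red path and at least one blue path; consequently each color class contains at least ⌈n/2⌉ paths. -/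
open SimpleGraph

lemma exists_other_edge {V : Type*} {G : SimpleGraph V} :
    ∀ {a b : V} (w : G.Walk a b), w.IsPath → ∀ {e : Sym2 V}, e ∈ w.edges →
    ∀ {v : V}, v ∈ e → v ≠ a → v ≠ b → ∃ e' ∈ w.edges, v ∈ e' ∧ e' ≠ e := by
  intro a b w
  induction w with
  | nil => intro _ e he; simp at he
  | @cons a c b h w' ih =>
    intro hw e he v hv hva hvb
    rw [Walk.cons_isPath_iff] at hw
    rw [Walk.edges_cons, List.mem_cons] at he
    rcases he with rfl | he
    · have hvc : v = c := by
        rcases Sym2.mem_iff.mp hv with h1 | h1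
        · exact absurd h1 hva
        · exact h1
      subst hvc
      cases w' with
      | nil => exact absurd rfl hvb
      | @cons _ d _ h2 w'' =>
        refine ⟨s(v, d), by simp, by simp, ?_⟩
        intro hcontra
        rw [Sym2.eq_iff] at hcontra
        rcases hcontra with ⟨h3, _⟩ | ⟨_, h4⟩
        · exact h.ne' h3
        · apply hw.2
          rw [Walk.support_cons]
          have ha : a ∈ w''.support := by rw [← h4]; exact w''.start_mem_support
          exact List.mem_cons_of_mem _ ha
    · by_cases hvc : v = c
      · subst hvc
        refine ⟨s(a, v), by simp, by simp, ?_⟩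
        intro hcontra
        exact hw.2 (w'.fst_mem_support_of_mem_edges (hcontra ▸ he))
      · obtain ⟨e', he', hve', hne⟩ := ih hw.1 he hv hvc hvb
        exact ⟨e', by simp [he'], hve', hne⟩

lemma cycle_incident {m : ℕ} {v : Fin (m + 3)} {e : Sym2 (Fin (m + 3))}
    (he : e ∈ (cycleGraph (m + 3)).edgeSet) (hv : v ∈ e) :
    e = s(v - 1, v) ∨ e = s(v, v + 1) := by
  induction e with
  | _ u w =>
    rw [mem_edgeSet, cycleGraph_adj] at he
    rcases Sym2.mem_iff.mp hv with rfl | rfl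
    · rcases he with h1 | h1
      · left
        have : w = v - 1 := by
          rw [eq_sub_iff_add_eq, ← h1]; letI := Fin.instCommRing (m+3); ring
        rw [this, Sym2.eq_swap]
      · right
        have : w = v + 1 := by rw [← h1]; letI := Fin.instCommRing (m+3); ring
        rw [this]
    · rcases he with h1 | h1
      · right
        have : u = v + 1 := by rw [← h1]; letI := Fin.instCommRing (m+3); ring
        rw [this, Sym2.eq_swap]
      · left
        have : u = v - 1 := by
          rw [eq_sub_iff_add_eq, ← h1]; letI := Fin.instCommRing (m+3); ring
        rw [this]

/-- In any 2-RSPS of the cycle `C_n`, every vertex is an endpoint of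
at least one path of each color; consequently each color class has at least
`⌈n/2⌉` paths. -/
theorem stmt5 (n : ℕ) (hn : 3 ≤ n)
    (P : Multiset (GPath (SimpleGraph.cycleGraph n) × Fin 2))
    (hP : IsRSPS (SimpleGraph.cycleGraph n) 2 P) :
    (∀ v : Fin n, ∀ c : Fin 2, ∃ p ∈ P, p.2 = c ∧ (p.1.a = v ∨ p.1.b = v)) ∧
    (∀ c : Fin 2, (n + 1) / 2 ≤ Multiset.card (P.filter (fun p => p.2 = c))) := by
  classical
  obtain ⟨m, rfl⟩ : ∃ m, n = m + 3 := ⟨n - 3, by omega⟩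
  have key : ∀ (v : Fin (m+3)) (c : Fin 2), ∃ p ∈ P, p.2 = c ∧ (p.1.a = v ∨ p.1.b = v) := by
    intro v c
    have he : s(v - 1, v) ∈ (cycleGraph (m+3)).edgeSet := by
      rw [mem_edgeSet, cycleGraph_adj]
      right
      exact sub_sub_cancel v 1
    have hf : s(v, v + 1) ∈ (cycleGraph (m+3)).edgeSet := by
      rw [mem_edgeSet, cycleGraph_adj]
      right
      exact add_sub_cancel_left v 1
    have hef : s(v - 1, v) ≠ s(v, v + 1) := by
      intro hcon
      rw [Sym2.eq_iff] at hcon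
      rcases hcon with ⟨_, h2⟩ | ⟨h1, _⟩
      · exact one_ne_zero (left_eq_add.mp h2)
      · have h2 : (2 : Fin (m+3)) = 0 := by letI := Fin.instCommRing (m+3); linear_combination -h1
        simp [Fin.ext_iff] at h2
        rw [Nat.mod_eq_of_lt (by omega)] at h2
        omega
    obtain ⟨p, hp, q, hq, hpq, hep, hfp, hfq, heq⟩ := hP _ _ he hf hef
    have hpend : p.1.a = v ∨ p.1.b = v := by
      by_contra hcon
      push_neg at hcon
      obtain ⟨e', he', hve', hne⟩ :=
        exists_other_edge p.1.walk p.1.isPath hep (Sym2.mem_mk_right _ _)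
          (fun h => hcon.1 h.symm) (fun h => hcon.2 h.symm)
      rcases cycle_incident (Walk.edges_subset_edgeSet _ he') hve' with h1 | h1
      · exact hne h1
      · exact hfp (h1 ▸ he')
    have hqend : q.1.a = v ∨ q.1.b = v := by
      by_contra hcon
      push_neg at hcon
      obtain ⟨e', he', hve', hne⟩ :=
        exists_other_edge q.1.walk q.1.isPath hfq (Sym2.mem_mk_left _ _)
          (fun h => hcon.1 h.symm) (fun h => hcon.2 h.symm)
      rcases cycle_incident (Walk.edges_subset_edgeSet _ he') hve' with h1 | h1
      · exact heq (h1 ▸ he')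
      · exact hne h1
    have hcol : ∀ x y : Fin 2, x ≠ y → ∀ c : Fin 2, x = c ∨ y = c := by decide
    rcases hcol p.2 q.2 hpq c with h | h
    · exact ⟨p, hp, h, hpend⟩
    · exact ⟨q, hq, h, hqend⟩
  refine ⟨key, ?_⟩
  intro c
  have key2 : ∀ v : Fin (m+3),
      ∃ p ∈ P.filter (fun p => p.2 = c), p.1.a = v ∨ p.1.b = v := by
    intro v
    obtain ⟨p, hp, hpc, hend⟩ := key v c
    exact ⟨p, Multiset.mem_filter.mpr ⟨hp, hpc⟩, hend⟩
  choose g hg1 hg2 using key2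
  have himg : (Finset.univ.image g).card ≤ Multiset.card (P.filter (fun p => p.2 = c)) := by
    refine le_trans (Finset.card_le_card ?_) (Multiset.toFinset_card_le _)
    intro p hp
    rw [Finset.mem_image] at hp
    obtain ⟨v, _, rfl⟩ := hp
    exact Multiset.mem_toFinset.mpr (hg1 v)
  have hmain : (m + 3) ≤ 2 * (Finset.univ.image g).card := by
    have h := Finset.card_le_mul_card_image (f := g) Finset.univ 2 ?_
    · simpa using h
    · intro p hp
      refine le_trans (Finset.card_le_card
        (?_ : _ ⊆ ({p.1.a, p.1.b} : Finset (Fin (m+3))))) ?_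
      · intro v hv
        rw [Finset.mem_filter] at hv
        have h2 := hg2 v
        rw [hv.2] at h2
        simp only [Finset.mem_insert, Finset.mem_singleton]
        exact h2.imp Eq.symm Eq.symm
      · exact le_trans (Finset.card_insert_le _ _) (by simp)
  omega
end

section
/- For the star S_n with n ≥ 4 vertices, the 2-rainbow separation number satisfies c_2(S_n) = 2⌊2(n−1)/3⌋. -/
open SimpleGraph

/-- The star on `n` vertices, with center `0`. -/
def starGraphFin (n : ℕ) : SimpleGraph (Fin n) :=
  SimpleGraph.fromRel (fun v _ => (v : ℕ) = 0)

section Star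

open Fin.NatCast

set_option linter.unusedSectionVars false

variable {n : ℕ} [NeZero n]

instance : Inhabited (GPath (starGraphFin n)) := ⟨⟨0, 0, .nil, .nil⟩⟩

lemma cast_eq_cast_iff {x k : ℕ} (hx : x < n) (hk : k < n) :
    (x : Fin n) = (k : Fin n) ↔ x = k := by
  constructor
  · intro h
    have := congrArg Fin.val h
    rwa [Fin.val_cast_of_lt hx, Fin.val_cast_of_lt hk] at this
  · rintro rfl; rfl

lemma cast_ne_zero' {k : ℕ} (hk0 : 0 < k) (hk : k < n) : (k : Fin n) ≠ 0 := by
  intro h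
  have := congrArg Fin.val h
  rw [Fin.val_cast_of_lt hk, Fin.val_zero] at this
  omega

lemma star_adj (u v : Fin n) :
    (starGraphFin n).Adj u v ↔ u ≠ v ∧ ((u : ℕ) = 0 ∨ (v : ℕ) = 0) := by
  simp [starGraphFin, SimpleGraph.fromRel_adj]

lemma adj_cast_zero {k : ℕ} (hk0 : 0 < k) (hk : k < n) :
    (starGraphFin n).Adj (k : Fin n) (0 : Fin n) := by
  rw [star_adj]
  exact ⟨cast_ne_zero' hk0 hk, Or.inr (by simp)⟩

lemma adj_zero_cast {k : ℕ} (hk0 : 0 < k) (hk : k < n) :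
    (starGraphFin n).Adj (0 : Fin n) (k : Fin n) :=
  (adj_cast_zero hk0 hk).symm

/-- path with two edges, or junk -/
def mkP (n : ℕ) [NeZero n] (k l : ℕ) : GPath (starGraphFin n) :=
  if h : 0 < k ∧ k < n ∧ 0 < l ∧ l < n ∧ k ≠ l then
    { a := (k : Fin n), b := (l : Fin n),
      walk := .cons (adj_cast_zero h.1 h.2.1) (.cons (adj_zero_cast h.2.2.1 h.2.2.2.1) .nil),
      isPath := by
        rw [SimpleGraph.Walk.isPath_def]
        show List.Nodup [(k : Fin n), 0, (l : Fin n)]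
        simp only [List.nodup_cons, List.mem_cons, List.mem_singleton, List.not_mem_nil,
          or_false, List.nodup_nil, and_true, not_or]
        refine ⟨⟨cast_ne_zero' h.1 h.2.1, ?_⟩, ?_, not_false⟩
        · rw [cast_eq_cast_iff h.2.1 h.2.2.2.1]; exact h.2.2.2.2
        · exact fun he => cast_ne_zero' h.2.2.1 h.2.2.2.1 he.symm }
  else ⟨0, 0, .nil, .nil⟩

/-- path with one edge, or junk -/
def mkS (n : ℕ) [NeZero n] (k : ℕ) : GPath (starGraphFin n) :=
  if h : 0 < k ∧ k < n then
    { a := (k : Fin n), b := 0,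
      walk := .cons (adj_cast_zero h.1 h.2) .nil,
      isPath := by
        rw [SimpleGraph.Walk.isPath_def]
        show List.Nodup [(k : Fin n), 0]
        simp only [List.nodup_cons, List.mem_singleton, List.nodup_nil, and_true,
          List.not_mem_nil, or_false, List.mem_cons]
        exact ⟨cast_ne_zero' h.1 h.2, not_false⟩ }
  else ⟨0, 0, .nil, .nil⟩

/-- the edge from center to leaf k -/
def ed (n : ℕ) [NeZero n] (k : ℕ) : Sym2 (Fin n) := s((0 : Fin n), (k : Fin n))

lemma ed_eq_ed_iff {x k : ℕ} (hx : x < n) (hk : k < n) : ed n x = ed n k ↔ x = k := by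
  constructor
  · intro h
    rw [ed, ed, Sym2.eq_iff] at h
    rcases h with ⟨-, h2⟩ | ⟨h1, h2⟩
    · exact (cast_eq_cast_iff hx hk).1 h2
    · have hx0 : x = 0 := by
        have := congrArg Fin.val h2
        rwa [Fin.val_cast_of_lt hx, Fin.val_zero] at this
      have hk0 : k = 0 := by
        have := congrArg Fin.val h1.symm
        rwa [Fin.val_cast_of_lt hk, Fin.val_zero] at this
      omega
  · rintro rfl; rfl

lemma ed_mem_mkP {x k l : ℕ} (h : 0 < k ∧ k < n ∧ 0 < l ∧ l < n ∧ k ≠ l) (hx : x < n) :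
    ed n x ∈ (mkP n k l).walk.edges ↔ x = k ∨ x = l := by
  rw [mkP, dif_pos h]
  show ed n x ∈ [s((k : Fin n), (0 : Fin n)), s((0 : Fin n), (l : Fin n))] ↔ _
  rw [show s((k : Fin n), (0 : Fin n)) = ed n k from Sym2.eq_swap,
    show s((0 : Fin n), (l : Fin n)) = ed n l from rfl]
  simp only [List.mem_cons, List.mem_singleton, List.not_mem_nil, or_false]
  rw [ed_eq_ed_iff hx h.2.1, ed_eq_ed_iff hx h.2.2.2.1]

lemma ed_mem_mkS {x k : ℕ} (h : 0 < k ∧ k < n) (hx : x < n) :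
    ed n x ∈ (mkS n k).walk.edges ↔ x = k := by
  rw [mkS, dif_pos h]
  show ed n x ∈ [s((k : Fin n), (0 : Fin n))] ↔ _
  rw [show s((k : Fin n), (0 : Fin n)) = ed n k from Sym2.eq_swap]
  simp only [List.mem_singleton]
  exact ed_eq_ed_iff hx h.2

lemma star_edge_iff (e : Sym2 (Fin n)) :
    e ∈ (starGraphFin n).edgeSet ↔ ∃ k, 0 < k ∧ k < n ∧ e = ed n k := by
  induction e using Sym2.ind with
  | _ u v =>
    rw [SimpleGraph.mem_edgeSet, star_adj]
    constructor
    · rintro ⟨huv, h0 | h0⟩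
      · refine ⟨v.val, ?_, v.isLt, ?_⟩
        · rcases Nat.eq_zero_or_pos v.val with h | h
          · exact absurd (Fin.ext (h0.trans h.symm)) huv
          · exact h
        · have hu : u = (0 : Fin n) := Fin.ext (by simp [h0])
          rw [ed, Fin.cast_val_eq_self, hu]
      · refine ⟨u.val, ?_, u.isLt, ?_⟩
        · rcases Nat.eq_zero_or_pos u.val with h | h
          · exact absurd (Fin.ext (h.trans h0.symm)) huv
          · exact h
        · have hv : v = (0 : Fin n) := Fin.ext (by simp [h0])
          rw [ed, Fin.cast_val_eq_self, Sym2.eq_swap, hv]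
    · rintro ⟨k, hk0, hkn, hkeq⟩
      rw [ed, Sym2.eq_iff] at hkeq
      rcases hkeq with ⟨h1, h2⟩ | ⟨h1, h2⟩
      · subst h1 h2
        constructor
        · intro h
          have := congrArg Fin.val h.symm
          rw [Fin.val_cast_of_lt hkn, Fin.val_zero] at this; omega
        · left; exact Fin.val_zero n
      · subst h1 h2
        constructor
        · intro h
          have := congrArg Fin.val h
          rw [Fin.val_cast_of_lt hkn, Fin.val_zero] at this; omega
        · right; exact Fin.val_zero n

/-- every path in the star has at most 2 edges -/
lemma star_path_short (p : GPath (starGraphFin n)) : p.walk.edges.length ≤ 2 := by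
  by_contra hlen
  push_neg at hlen
  obtain ⟨a, b, w, hw⟩ := p
  match w, hw, hlen with
  | .cons (v := v1) h1 (.cons (v := v2) h2 (.cons (v := v3) h3 w')), hw, hlen =>
    rw [SimpleGraph.Walk.isPath_def] at hw
    simp only [SimpleGraph.Walk.support_cons] at hw
    have h01 : a.val ≠ v1.val := fun h => by rw [Fin.ext h] at hw; simp at hw
    have h02 : a.val ≠ v2.val := fun h => by rw [Fin.ext h] at hw; simp at hw
    have h12 : v1.val ≠ v2.val := fun h => by rw [Fin.ext h] at hw; simp at hw
    have h13 : v1.val ≠ v3.val := fun h => by rw [Fin.ext h] at hw; simp at hw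
    have h23 : v2.val ≠ v3.val := fun h => by rw [Fin.ext h] at hw; simp at hw
    rw [star_adj] at h1 h2 h3
    rcases h1.2 with h | h <;> rcases h2.2 with h' | h' <;> rcases h3.2 with h'' | h'' <;> omega

lemma sum_card_filter {α β : Type*} [DecidableEq α] (E : Finset α) (Q : Multiset β)
    (r : α → β → Prop) [∀ a b, Decidable (r a b)]
    (h : ∀ b, (E.filter (fun a => r a b)).card ≤ 2) :
    ∑ a ∈ E, (Q.filter (r a)).card ≤ 2 * Multiset.card Q := by
  induction Q using Multiset.induction with
  | empty => simp
  | cons b s ih =>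
    have hcard : ∀ a, (Multiset.filter (r a) (b ::ₘ s)).card
        = (Multiset.filter (r a) s).card + (if r a b then 1 else 0) := by
      intro a
      rw [Multiset.filter_cons, Multiset.card_add]
      split_ifs <;> simp [add_comm]
    simp only [hcard]
    rw [Finset.sum_add_distrib]
    have hb : ∑ a ∈ E, (if r a b then 1 else 0) = (E.filter (fun a => r a b)).card := by
      rw [Finset.card_filter]
    rw [hb, Multiset.card_cons]
    have := h b
    omega

lemma weak_lower (hn : 4 ≤ n) (Q : Multiset (GPath (starGraphFin n)))
    (hQ : ∀ e f : Sym2 (Fin n), e ∈ (starGraphFin n).edgeSet → f ∈ (starGraphFin n).edgeSet → e ≠ f →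
      ∃ p ∈ Q, (e ∈ p.walk.edges ∧ f ∉ p.walk.edges) ∨
        (f ∈ p.walk.edges ∧ e ∉ p.walk.edges)) :
    2 * (n - 1) / 3 ≤ Multiset.card Q := by
  classical
  set E : Finset (Sym2 (Fin n)) :=
    (Finset.univ.erase 0).image (fun v => s((0 : Fin n), v)) with hE
  have hEcard : E.card = n - 1 := by
    rw [hE, Finset.card_image_of_injOn, Finset.card_erase_of_mem (Finset.mem_univ _),
      Finset.card_univ, Fintype.card_fin]
    intro u hu v hv huv
    rw [Sym2.eq_iff] at huv
    rcases huv with ⟨-, h⟩ | ⟨h, h'⟩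
    · exact h
    · simp at hu
      exact absurd h' hu
  have hEedge : ∀ e ∈ E, e ∈ (starGraphFin n).edgeSet := by
    intro e he
    rw [hE, Finset.mem_image] at he
    obtain ⟨v, hv, rfl⟩ := he
    simp only [Finset.mem_erase, Finset.mem_univ, and_true] at hv
    rw [SimpleGraph.mem_edgeSet]
    rw [starGraphFin, SimpleGraph.fromRel_adj]
    exact ⟨fun h => hv h.symm, Or.inl (Fin.val_zero n)⟩
  set sig : Sym2 (Fin n) → Multiset (GPath (starGraphFin n)) :=
    fun e => Q.filter (fun p => e ∈ p.walk.edges) with hsig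
  have hinj : ∀ e ∈ E, ∀ f ∈ E, sig e = sig f → e = f := by
    intro e he f hf hef
    by_contra hne
    obtain ⟨p, hp, hcase⟩ := hQ e f (hEedge e he) (hEedge f hf) hne
    rcases hcase with ⟨h1, h2⟩ | ⟨h1, h2⟩
    · have hpe : p ∈ sig e := Multiset.mem_filter.2 ⟨hp, h1⟩
      have hpf : p ∉ sig f := fun hh => h2 (Multiset.mem_filter.1 hh).2
      rw [hef] at hpe
      exact hpf hpe
    · have hpf : p ∈ sig f := Multiset.mem_filter.2 ⟨hp, h1⟩
      have hpe : p ∉ sig e := fun hh => h2 (Multiset.mem_filter.1 hh).2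
      rw [← hef] at hpf
      exact hpe hpf
  have hupper : ∑ e ∈ E, (sig e).card ≤ 2 * Multiset.card Q := by
    apply sum_card_filter
    intro p
    calc (E.filter (fun e => e ∈ p.walk.edges)).card
        ≤ p.walk.edges.toFinset.card := by
          apply Finset.card_le_card
          intro e he
          rw [List.mem_toFinset]
          exact (Finset.mem_filter.1 he).2
      _ ≤ p.walk.edges.length := p.walk.edges.toFinset_card_le
      _ ≤ 2 := star_path_short p
  set Z := E.filter (fun e => (sig e).card = 0) with hZdef
  set O := E.filter (fun e => (sig e).card = 1) with hOdef
  have hpen : ∀ e ∈ E, 2 ≤ (sig e).card +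
      (2 * (if (sig e).card = 0 then 1 else 0) + (if (sig e).card = 1 then 1 else 0)) := by
    intro e _
    split_ifs <;> omega
  have hlow : 2 * (n - 1) ≤ ∑ e ∈ E, (sig e).card + (2 * Z.card + O.card) := by
    have h1 : ∑ e ∈ E, (2:ℕ) = 2 * (n - 1) := by
      rw [Finset.sum_const, hEcard]; ring
    have h2 : ∑ e ∈ E, ((sig e).card +
        (2 * (if (sig e).card = 0 then 1 else 0) + (if (sig e).card = 1 then 1 else 0)))
        = ∑ e ∈ E, (sig e).card + (2 * Z.card + O.card) := by
      rw [Finset.sum_add_distrib, Finset.sum_add_distrib, ← Finset.mul_sum]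
      congr 2
      · rw [hZdef, Finset.card_filter]
      · rw [hOdef, Finset.card_filter]
    calc 2 * (n - 1) = ∑ e ∈ E, (2:ℕ) := h1.symm
      _ ≤ _ := Finset.sum_le_sum hpen
      _ = _ := h2
  have hZ : Z.card ≤ 1 := by
    rw [Finset.card_le_one]
    intro e he f hf
    rw [hZdef, Finset.mem_filter] at he hf
    apply hinj e he.1 f hf.1
    rw [Multiset.card_eq_zero.1 he.2, Multiset.card_eq_zero.1 hf.2]
  have hO : O.card ≤ Multiset.card Q := by
    have hmap : ∀ e ∈ O, ∃ p, sig e = {p} := by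
      intro e he
      rw [hOdef, Finset.mem_filter] at he
      exact Multiset.card_eq_one.1 he.2
    have key : ∀ e ∈ O, (sig e).toList.headI ∈ sig e ∧ sig e = {(sig e).toList.headI} := by
      intro e he
      obtain ⟨p, hp⟩ := hmap e he
      rw [hp]
      simp
    calc O.card ≤ Q.toFinset.card := by
          apply Finset.card_le_card_of_injOn (fun e => (sig e).toList.headI)
          · intro e he
            rw [Finset.mem_coe, Multiset.mem_toFinset]
            exact (Multiset.mem_filter.1 (key e he).1).1
          · intro e he f hf hfe
            apply hinj e (Finset.mem_filter.1 (hOdef ▸ he)).1 f (Finset.mem_filter.1 (hOdef ▸ hf)).1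
            rw [(key e he).2, (key f hf).2]
            simp only [hfe]
      _ ≤ Multiset.card Q := Multiset.toFinset_card_le Q
  omega

/-! ## The construction -/

def numB (m : ℕ) : ℕ := if m % 3 = 1 then (m - 4) / 3 else m / 3

def blockP (n : ℕ) [NeZero n] (j : ℕ) : Multiset (GPath (starGraphFin n) × Fin 2) :=
  {(mkP n (3*j+1) (3*j+2), 0), (mkP n (3*j+2) (3*j+3), 0),
   (mkP n (3*j+1) (3*j+3), 1), (mkP n (3*j+3) (3*j+2), 1)}

def extraP (n : ℕ) [NeZero n] : Multiset (GPath (starGraphFin n) × Fin 2) :=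
  if (n-1) % 3 = 0 then 0
  else if (n-1) % 3 = 1 then
    {(mkP n (n-4) (n-3), 0), (mkP n (n-3) (n-2), 0),
     (mkP n (n-4) (n-1), 1), (mkP n (n-2) (n-1), 1)}
  else {(mkS n (n-2), 0), (mkS n (n-1), 1)}

def design (n : ℕ) [NeZero n] : Multiset (GPath (starGraphFin n) × Fin 2) :=
  (Multiset.range (numB (n-1))).bind (fun j => blockP n j) + extraP n

lemma mem_design_block {j : ℕ} (hj : j < numB (n-1)) {x} (hx : x ∈ blockP n j) :
    x ∈ design n :=
  Multiset.mem_add.2 (Or.inl (Multiset.mem_bind.2 ⟨j, Multiset.mem_range.2 hj, hx⟩))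

lemma mem_design_extra {x} (hx : x ∈ extraP n) : x ∈ design n :=
  Multiset.mem_add.2 (Or.inr hx)

lemma design_card (hn : 4 ≤ n) : Multiset.card (design n) = 2 * (2 * (n-1) / 3) := by
  have hbind : Multiset.card ((Multiset.range (numB (n-1))).bind (fun j => blockP n j))
      = 4 * numB (n-1) := by
    rw [Multiset.card_bind]
    have : ∀ j, Multiset.card (blockP n j) = 4 := fun j => rfl
    simp [this, Multiset.map_const', mul_comm]
  rw [design, Multiset.card_add, hbind, extraP, numB]
  split_ifs with h1 h2 <;> simp <;> omega


lemma f10 : (1 : Fin 2) ≠ (0 : Fin 2) := by decide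
lemma f01 : (0 : Fin 2) ≠ (1 : Fin 2) := by decide

lemma mem4_1 {α} (a b c d : α) : a ∈ ({a,b,c,d} : Multiset α) := by simp

lemma mem4_2 {α} (a b c d : α) : b ∈ ({a,b,c,d} : Multiset α) := by simp

lemma mem4_3 {α} (a b c d : α) : c ∈ ({a,b,c,d} : Multiset α) := by simp

lemma mem4_4 {α} (a b c d : α) : d ∈ ({a,b,c,d} : Multiset α) := by simp

lemma mem2_1 {α} (a b : α) : a ∈ ({a,b} : Multiset α) := by simp

lemma mem2_2 {α} (a b : α) : b ∈ ({a,b} : Multiset α) := by simp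

lemma numB_le (hn : 4 ≤ n) : 3 * numB (n-1) ≤ n - 1 := by
  unfold numB
  split_ifs <;> omega

lemma c0_spec (hn : 4 ≤ n) {i : ℕ} (h0 : 0 < i) (hiT : i ≤ 3 * numB (n-1)) :
    ∃ p : GPath (starGraphFin n), (p, (0 : Fin 2)) ∈ design n ∧
      ed n i ∈ p.walk.edges ∧
      ∀ x, x < n → ed n x ∈ p.walk.edges →
        ((i-1)/3 = (x-1)/3 ∧ 0 < x ∧ x ≤ 3 * numB (n-1)) := by
  have hBle := numB_le hn
  set b := (i-1)/3 with hbdef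
  have hb : b < numB (n-1) := by omega
  by_cases hc : (i-1) % 3 = 2
  · refine ⟨mkP n (3*b+2) (3*b+3), mem_design_block hb (by rw [blockP]; exact mem4_2 _ _ _ _), ?_, ?_⟩
    · rw [ed_mem_mkP (by omega) (by omega)]; omega
    · intro x hx hmem
      rw [ed_mem_mkP (by omega) hx] at hmem
      omega
  · refine ⟨mkP n (3*b+1) (3*b+2), mem_design_block hb (by rw [blockP]; exact mem4_1 _ _ _ _), ?_, ?_⟩
    · rw [ed_mem_mkP (by omega) (by omega)]; omega
    · intro x hx hmem
      rw [ed_mem_mkP (by omega) hx] at hmem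
      omega

lemma c1_spec (hn : 4 ≤ n) {i : ℕ} (h0 : 0 < i) (hiT : i ≤ 3 * numB (n-1)) :
    ∃ p : GPath (starGraphFin n), (p, (1 : Fin 2)) ∈ design n ∧
      ed n i ∈ p.walk.edges ∧
      ∀ x, x < n → ed n x ∈ p.walk.edges →
        ((i-1)/3 = (x-1)/3 ∧ 0 < x ∧ x ≤ 3 * numB (n-1)) := by
  have hBle := numB_le hn
  set b := (i-1)/3 with hbdef
  have hb : b < numB (n-1) := by omega
  by_cases hc : (i-1) % 3 = 1
  · refine ⟨mkP n (3*b+3) (3*b+2), mem_design_block hb (by rw [blockP]; exact mem4_4 _ _ _ _), ?_, ?_⟩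
    · rw [ed_mem_mkP (by omega) (by omega)]; omega
    · intro x hx hmem
      rw [ed_mem_mkP (by omega) hx] at hmem
      omega
  · refine ⟨mkP n (3*b+1) (3*b+3), mem_design_block hb (by rw [blockP]; exact mem4_3 _ _ _ _), ?_, ?_⟩
    · rw [ed_mem_mkP (by omega) (by omega)]; omega
    · intro x hx hmem
      rw [ed_mem_mkP (by omega) hx] at hmem
      omega

set_option maxHeartbeats 2000000 in
lemma design_rsps (hn : 4 ≤ n) : IsRSPS (starGraphFin n) 2 (design n) := by
  have hBle : 3 * numB (n-1) ≤ n - 1 := numB_le hn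
  have hT1 : (n-1) % 3 = 1 → 3 * numB (n-1) = n - 5 := by
    intro h; unfold numB; rw [if_pos h]; omega
  have hT2 : (n-1) % 3 ≠ 1 → 3 * numB (n-1) = (n-1) - (n-1) % 3 := by
    intro h; unfold numB; rw [if_neg h]; omega
  have H : ∀ i j : ℕ, 0 < i → i < n → 0 < j → j < n → i < j →
      ∃ p ∈ design n, ∃ q ∈ design n, p.2 ≠ q.2 ∧
        ed n i ∈ p.1.walk.edges ∧ ed n j ∉ p.1.walk.edges ∧
        ed n j ∈ q.1.walk.edges ∧ ed n i ∉ q.1.walk.edges := by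
    intro i j hi0 hin hj0 hjn hij
    by_cases hjT : j ≤ 3 * numB (n-1)
    · -- both in blocks
      have hiT : i ≤ 3 * numB (n-1) := by omega
      by_cases hsame : (i-1)/3 = (j-1)/3
      · -- same block
        set b := (i-1)/3 with hbdef
        have hb : b < numB (n-1) := by omega
        have hcase : (i = 3*b+1 ∧ j = 3*b+2) ∨ (i = 3*b+1 ∧ j = 3*b+3)
            ∨ (i = 3*b+2 ∧ j = 3*b+3) := by omega
        rcases hcase with ⟨hi, hj⟩ | ⟨hi, hj⟩ | ⟨hi, hj⟩
        · refine ⟨(mkP n (3*b+1) (3*b+3), 1), mem_design_block hb (by rw [blockP]; exact mem4_3 _ _ _ _),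
            (mkP n (3*b+2) (3*b+3), 0), mem_design_block hb (by rw [blockP]; exact mem4_2 _ _ _ _),
            f10, ?_, ?_, ?_, ?_⟩ <;>
            rw [ed_mem_mkP (by omega) (by omega)] <;> omega
        · refine ⟨(mkP n (3*b+1) (3*b+2), 0), mem_design_block hb (by rw [blockP]; exact mem4_1 _ _ _ _),
            (mkP n (3*b+3) (3*b+2), 1), mem_design_block hb (by rw [blockP]; exact mem4_4 _ _ _ _),
            f01, ?_, ?_, ?_, ?_⟩ <;>
            rw [ed_mem_mkP (by omega) (by omega)] <;> omega
        · refine ⟨(mkP n (3*b+1) (3*b+2), 0), mem_design_block hb (by rw [blockP]; exact mem4_1 _ _ _ _),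
            (mkP n (3*b+1) (3*b+3), 1), mem_design_block hb (by rw [blockP]; exact mem4_3 _ _ _ _),
            f01, ?_, ?_, ?_, ?_⟩ <;>
            rw [ed_mem_mkP (by omega) (by omega)] <;> omega
      · -- different blocks
        obtain ⟨p, hpmem, hpin, hpall⟩ := c0_spec hn hi0 hiT
        obtain ⟨q, hqmem, hqin, hqall⟩ := c1_spec hn hj0 hjT
        refine ⟨(p, 0), hpmem, (q, 1), hqmem, f01, hpin, ?_, hqin, ?_⟩
        · intro hjp; exact hsame ((hpall j hjn hjp).1)
        · intro hiq; exact hsame ((hqall i hin hiq).1).symm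
    · -- j beyond the blocks
      have hr : (n-1) % 3 = 1 ∨ (n-1) % 3 = 2 := by
        by_contra hcon
        push_neg at hcon
        have h00 : (n-1) % 3 ≠ 1 := by omega
        have := hT2 h00
        omega
      rcases hr with hr | hr
      · -- r = 1 : gadget on n-4, n-3, n-2, n-1
        have hTeq := hT1 hr
        have hn5 : 5 ≤ n := by omega
        have hex : ∀ y ∈ extraP n, y ∈ design n := fun y hy => mem_design_extra hy
        have hQ1 : (mkP n (n-4) (n-3), (0 : Fin 2)) ∈ design n := by
          apply mem_design_extra
          rw [extraP, if_neg (by omega), if_pos (by omega)]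
          exact mem4_1 _ _ _ _
        have hQ2 : (mkP n (n-3) (n-2), (0 : Fin 2)) ∈ design n := by
          apply mem_design_extra
          rw [extraP, if_neg (by omega), if_pos (by omega)]
          exact mem4_2 _ _ _ _
        have hQ3 : (mkP n (n-4) (n-1), (1 : Fin 2)) ∈ design n := by
          apply mem_design_extra
          rw [extraP, if_neg (by omega), if_pos (by omega)]
          exact mem4_3 _ _ _ _
        have hQ4 : (mkP n (n-2) (n-1), (1 : Fin 2)) ∈ design n := by
          apply mem_design_extra
          rw [extraP, if_neg (by omega), if_pos (by omega)]
          exact mem4_4 _ _ _ _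
        by_cases hiT : i ≤ 3 * numB (n-1)
        · -- i in blocks, j in gadget
          have hjc : j = n-4 ∨ j = n-3 ∨ j = n-2 ∨ j = n-1 := by omega
          rcases hjc with hj | hj | hj | hj
          · obtain ⟨p, hpmem, hpin, hpall⟩ := c0_spec hn hi0 hiT
            refine ⟨(p, 0), hpmem, (mkP n (n-4) (n-1), 1), hQ3, f01, hpin, ?_, ?_, ?_⟩
            · intro hjp; have := (hpall j hjn hjp).2.2; omega
            · rw [ed_mem_mkP (by omega) (by omega)]; omega
            · rw [ed_mem_mkP (by omega) (by omega)]; omega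
          · obtain ⟨p, hpmem, hpin, hpall⟩ := c1_spec hn hi0 hiT
            refine ⟨(p, 1), hpmem, (mkP n (n-4) (n-3), 0), hQ1, f10, hpin, ?_, ?_, ?_⟩
            · intro hjp; have := (hpall j hjn hjp).2.2; omega
            · rw [ed_mem_mkP (by omega) (by omega)]; omega
            · rw [ed_mem_mkP (by omega) (by omega)]; omega
          · obtain ⟨p, hpmem, hpin, hpall⟩ := c0_spec hn hi0 hiT
            refine ⟨(p, 0), hpmem, (mkP n (n-2) (n-1), 1), hQ4, f01, hpin, ?_, ?_, ?_⟩
            · intro hjp; have := (hpall j hjn hjp).2.2; omega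
            · rw [ed_mem_mkP (by omega) (by omega)]; omega
            · rw [ed_mem_mkP (by omega) (by omega)]; omega
          · obtain ⟨p, hpmem, hpin, hpall⟩ := c0_spec hn hi0 hiT
            refine ⟨(p, 0), hpmem, (mkP n (n-2) (n-1), 1), hQ4, f01, hpin, ?_, ?_, ?_⟩
            · intro hjp; have := (hpall j hjn hjp).2.2; omega
            · rw [ed_mem_mkP (by omega) (by omega)]; omega
            · rw [ed_mem_mkP (by omega) (by omega)]; omega
        · -- both in gadget
          have hcase : (i = n-4 ∧ j = n-3) ∨ (i = n-4 ∧ j = n-2) ∨ (i = n-4 ∧ j = n-1)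
              ∨ (i = n-3 ∧ j = n-2) ∨ (i = n-3 ∧ j = n-1) ∨ (i = n-2 ∧ j = n-1) := by omega
          rcases hcase with ⟨hi, hj⟩ | ⟨hi, hj⟩ | ⟨hi, hj⟩ | ⟨hi, hj⟩ | ⟨hi, hj⟩ | ⟨hi, hj⟩
          · refine ⟨(mkP n (n-4) (n-1), 1), hQ3, (mkP n (n-3) (n-2), 0), hQ2,
              f10, ?_, ?_, ?_, ?_⟩ <;> rw [ed_mem_mkP (by omega) (by omega)] <;> omega
          · refine ⟨(mkP n (n-4) (n-3), 0), hQ1, (mkP n (n-2) (n-1), 1), hQ4,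
              f01, ?_, ?_, ?_, ?_⟩ <;> rw [ed_mem_mkP (by omega) (by omega)] <;> omega
          · refine ⟨(mkP n (n-4) (n-3), 0), hQ1, (mkP n (n-2) (n-1), 1), hQ4,
              f01, ?_, ?_, ?_, ?_⟩ <;> rw [ed_mem_mkP (by omega) (by omega)] <;> omega
          · refine ⟨(mkP n (n-4) (n-3), 0), hQ1, (mkP n (n-2) (n-1), 1), hQ4,
              f01, ?_, ?_, ?_, ?_⟩ <;> rw [ed_mem_mkP (by omega) (by omega)] <;> omega
          · refine ⟨(mkP n (n-3) (n-2), 0), hQ2, (mkP n (n-4) (n-1), 1), hQ3,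
              f01, ?_, ?_, ?_, ?_⟩ <;> rw [ed_mem_mkP (by omega) (by omega)] <;> omega
          · refine ⟨(mkP n (n-3) (n-2), 0), hQ2, (mkP n (n-4) (n-1), 1), hQ3,
              f01, ?_, ?_, ?_, ?_⟩ <;> rw [ed_mem_mkP (by omega) (by omega)] <;> omega
      · -- r = 2 : two single-edge paths on n-2, n-1
        have hTeq := hT2 (by omega)
        have hn5 : 5 ≤ n := by omega
        have hS1 : (mkS n (n-2), (0 : Fin 2)) ∈ design n := by
          apply mem_design_extra
          rw [extraP, if_neg (by omega), if_neg (by omega)]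
          exact mem2_1 _ _
        have hS2 : (mkS n (n-1), (1 : Fin 2)) ∈ design n := by
          apply mem_design_extra
          rw [extraP, if_neg (by omega), if_neg (by omega)]
          exact mem2_2 _ _
        by_cases hiT : i ≤ 3 * numB (n-1)
        · have hjc : j = n-2 ∨ j = n-1 := by omega
          rcases hjc with hj | hj
          · obtain ⟨p, hpmem, hpin, hpall⟩ := c1_spec hn hi0 hiT
            refine ⟨(p, 1), hpmem, (mkS n (n-2), 0), hS1, f10, hpin, ?_, ?_, ?_⟩
            · intro hjp; have := (hpall j hjn hjp).2.2; omega
            · rw [ed_mem_mkS (by omega) (by omega)]; omega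
            · rw [ed_mem_mkS (by omega) (by omega)]; omega
          · obtain ⟨p, hpmem, hpin, hpall⟩ := c0_spec hn hi0 hiT
            refine ⟨(p, 0), hpmem, (mkS n (n-1), 1), hS2, f01, hpin, ?_, ?_, ?_⟩
            · intro hjp; have := (hpall j hjn hjp).2.2; omega
            · rw [ed_mem_mkS (by omega) (by omega)]; omega
            · rw [ed_mem_mkS (by omega) (by omega)]; omega
        · have hij' : i = n-2 ∧ j = n-1 := by omega
          obtain ⟨hi, hj⟩ := hij'
          refine ⟨(mkS n (n-2), 0), hS1, (mkS n (n-1), 1), hS2,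
            f01, ?_, ?_, ?_, ?_⟩ <;> rw [ed_mem_mkS (by omega) (by omega)] <;> omega
  intro e f he hf hef
  rw [star_edge_iff] at he hf
  obtain ⟨i, hi0, hin, rfl⟩ := he
  obtain ⟨j, hj0, hjn, rfl⟩ := hf
  have hij : i ≠ j := fun h => hef (by rw [h])
  rcases Nat.lt_or_ge i j with h | h
  · exact H i j hi0 hin hj0 hjn h
  · have hlt : j < i := by omega
    obtain ⟨p, hp, q, hq, hc, h1, h2, h3, h4⟩ := H j i hj0 hjn hi0 hin hlt
    exact ⟨q, hq, p, hp, fun hh => hc hh.symm, h3, h4, h1, h2⟩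

end Star

/-- For the star `S_n` with `n ≥ 4`, `c_2(S_n) = 2⌊2(n−1)/3⌋`. -/
theorem stmt6 (n : ℕ) (hn : 4 ≤ n) :
    cRSPS (starGraphFin n) 2 = 2 * (2 * (n - 1) / 3) := by
  haveI : NeZero n := ⟨by omega⟩
  have hmem : 2 * (2 * (n - 1) / 3) ∈
      {m | ∃ P : Multiset (GPath (starGraphFin n) × Fin 2),
        IsRSPS (starGraphFin n) 2 P ∧ Multiset.card P = m} :=
    ⟨design n, design_rsps hn, design_card hn⟩
  apply le_antisymm
  · exact Nat.sInf_le hmem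
  · obtain ⟨P, hP, hcard⟩ := Nat.sInf_mem (⟨_, hmem⟩ : Set.Nonempty _)
    suffices hfin : 2 * (2 * (n - 1) / 3) ≤ Multiset.card P by
      exact hfin.trans_eq hcard
    classical
    have htwo : ∀ a : Fin 2, a = 0 ∨ a = 1 := by decide
    set P0 : Multiset (GPath (starGraphFin n)) :=
      (P.filter (fun x => x.2 = 0)).map Prod.fst with hP0
    set P1 : Multiset (GPath (starGraphFin n)) :=
      (P.filter (fun x => x.2 = 1)).map Prod.fst with hP1
    have hw0 : ∀ e f : Sym2 (Fin n), e ∈ (starGraphFin n).edgeSet → f ∈ (starGraphFin n).edgeSet →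
        e ≠ f → ∃ p ∈ P0, (e ∈ p.walk.edges ∧ f ∉ p.walk.edges) ∨
          (f ∈ p.walk.edges ∧ e ∉ p.walk.edges) := by
      intro e f he hf hef
      obtain ⟨p, hp, q, hq, hc, h1, h2, h3, h4⟩ := hP e f he hf hef
      rcases htwo p.2 with hp2 | hp2
      · exact ⟨p.1, Multiset.mem_map.2 ⟨p, Multiset.mem_filter.2 ⟨hp, hp2⟩, rfl⟩,
          Or.inl ⟨h1, h2⟩⟩
      · have hq2 : q.2 = 0 := by
          rcases htwo q.2 with h | h
          · exact h
          · exact absurd (hp2.trans h.symm) hc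
        exact ⟨q.1, Multiset.mem_map.2 ⟨q, Multiset.mem_filter.2 ⟨hq, hq2⟩, rfl⟩,
          Or.inr ⟨h3, h4⟩⟩
    have hw1 : ∀ e f : Sym2 (Fin n), e ∈ (starGraphFin n).edgeSet → f ∈ (starGraphFin n).edgeSet →
        e ≠ f → ∃ p ∈ P1, (e ∈ p.walk.edges ∧ f ∉ p.walk.edges) ∨
          (f ∈ p.walk.edges ∧ e ∉ p.walk.edges) := by
      intro e f he hf hef
      obtain ⟨p, hp, q, hq, hc, h1, h2, h3, h4⟩ := hP e f he hf hef
      rcases htwo p.2 with hp2 | hp2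
      · have hq2 : q.2 = 1 := by
          rcases htwo q.2 with h | h
          · exact absurd (hp2.trans h.symm) hc
          · exact h
        exact ⟨q.1, Multiset.mem_map.2 ⟨q, Multiset.mem_filter.2 ⟨hq, hq2⟩, rfl⟩,
          Or.inr ⟨h3, h4⟩⟩
      · exact ⟨p.1, Multiset.mem_map.2 ⟨p, Multiset.mem_filter.2 ⟨hp, hp2⟩, rfl⟩,
          Or.inl ⟨h1, h2⟩⟩
    have hl0 : 2 * (n - 1) / 3 ≤ Multiset.card P0 := weak_lower hn P0 hw0
    have hl1 : 2 * (n - 1) / 3 ≤ Multiset.card P1 := weak_lower hn P1 hw1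
    have hcards : Multiset.card P0 + Multiset.card P1 ≤ Multiset.card P := by
      rw [hP0, hP1, Multiset.card_map, Multiset.card_map]
      have hsplit : P.filter (fun x => x.2 = 0) + P.filter (fun x => x.2 = 1) ≤ P := by
        have : P.filter (fun x => x.2 = 1) = P.filter (fun x => ¬ x.2 = 0) := by
          apply Multiset.filter_congr
          intro x _
          constructor
          · intro h h0; rw [h0] at h; exact absurd h (by decide)
          · intro h; rcases htwo x.2 with h0 | h1
            · exact absurd h0 h
            · exact h1
        rw [this, Multiset.filter_add_not]
      have := Multiset.card_le_card hsplit
      rwa [Multiset.card_add] at this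
    omega
end

section
/- The only strongly separating path system of the path P_n (n ≥ 3) consisting of at most n−1 paths is the set of all single-edge paths E(P_n); in partic06ular ssp(P_n) = n − 1. -/
open SimpleGraph

lemma pg_edge_mem_iff {n : ℕ} {e : Sym2 (Fin n)} :
    e ∈ (pathGraph n).edgeSet ↔ ∃ k : ℕ, ∃ h : k + 1 < n,
      e = s(⟨k, by omega⟩, ⟨k+1, h⟩) := by
  induction e with
  | _ u v =>
    rw [mem_edgeSet, pathGraph_adj]
    constructor
    · rintro (h | h)
      · exact ⟨u.val, by omega, by rw [Sym2.eq_iff]; left; constructor <;> (ext; simp only [Fin.val_mk]; try omega)⟩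
      · exact ⟨v.val, by omega, by rw [Sym2.eq_iff]; right; constructor <;> (ext; simp only [Fin.val_mk]; try omega)⟩
    · rintro ⟨k, hk, he⟩
      rw [Sym2.eq_iff] at he
      rcases he with ⟨h1, h2⟩ | ⟨h1, h2⟩ <;> subst h1 <;> subst h2 <;> simp

lemma pg_mem_support {n : ℕ} {x y : Fin n} (w : (pathGraph n).Walk x y)
    (v : Fin n) (h1 : min x.val y.val ≤ v.val) (h2 : v.val ≤ max x.val y.val) :
    v ∈ w.support := by
  induction w with
  | nil => simp only [Walk.support_nil, List.mem_singleton]; ext; omega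
  | @cons x c y h w ih =>
    rw [Walk.support_cons, List.mem_cons]
    by_cases hv : v = x
    · left; exact hv
    · right
      have hne : v.val ≠ x.val := fun hc => hv (Fin.ext hc)
      have hadj := pathGraph_adj.mp h
      exact ih (by omega) (by omega)

lemma pg_path_edge_iff {n : ℕ} {x y : Fin n} (w : (pathGraph n).Walk x y) (hw : w.IsPath)
    (k : ℕ) (hk : k + 1 < n) :
    s((⟨k, by omega⟩ : Fin n), ⟨k+1, hk⟩) ∈ w.edges ↔
      min x.val y.val ≤ k ∧ k + 1 ≤ max x.val y.val := by
  induction w with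
  | nil => simp
  | @cons x c y h w ih =>
    rw [Walk.cons_isPath_iff] at hw
    have hadj := pathGraph_adj.mp h
    have hx_not : ¬(min c.val y.val ≤ x.val ∧ x.val ≤ max c.val y.val) :=
      fun hc => hw.2 (pg_mem_support w x hc.1 hc.2)
    rw [Walk.edges_cons, List.mem_cons, ih hw.1]
    have heq : (s((⟨k, by omega⟩ : Fin n), ⟨k+1, hk⟩) = s(x, c)) ↔
        ((k = x.val ∧ k + 1 = c.val) ∨ (k = c.val ∧ k + 1 = x.val)) := by
      rw [Sym2.eq_iff]
      constructor
      · rintro (⟨h1, h2⟩ | ⟨h1, h2⟩)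
        · left; rw [← h1, ← h2]; simp
        · right; rw [← h1, ← h2]; simp
      · rintro (⟨h1, h2⟩ | ⟨h1, h2⟩)
        · left; constructor <;> (ext; simp only [Fin.val_mk]; omega)
        · right; constructor <;> (ext; simp only [Fin.val_mk]; omega)
    rw [heq]
    omega

lemma pg_path_length {n : ℕ} {x y : Fin n} (w : (pathGraph n).Walk x y) (hw : w.IsPath) :
    w.edges.length = max x.val y.val - min x.val y.val := by
  induction w with
  | nil => simp
  | @cons x c y h w ih =>
    rw [Walk.cons_isPath_iff] at hw
    have hadj := pathGraph_adj.mp h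
    have hx_not : ¬(min c.val y.val ≤ x.val ∧ x.val ≤ max c.val y.val) :=
      fun hc => hw.2 (pg_mem_support w x hc.1 hc.2)
    rw [Walk.edges_cons, List.length_cons, ih hw.1]
    omega



def SepQ (m : ℕ) (Q : Multiset (ℕ × ℕ)) : Prop :=
  ∀ e f : ℕ, e < m → f < m → e ≠ f →
    ∃ q ∈ Q, (q.1 ≤ e ∧ e < q.2) ∧ ¬(q.1 ≤ f ∧ f < q.2)

lemma core_lemma : ∀ m : ℕ, 2 ≤ m → ∀ Q : Multiset (ℕ × ℕ),
    (∀ q ∈ Q, q.2 ≤ m) → SepQ m Q → Multiset.card Q ≤ m →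
    (∀ q ∈ Q, q.2 = q.1 + 1) ∧ Q.map Prod.fst = Multiset.range m := by
  intro m hm
  induction m, hm using Nat.le_induction with
  | base =>
    intro Q hbd hsep hcard
    obtain ⟨qa, hqa, ⟨ha1, ha2⟩, ha3⟩ := hsep 0 1 (by omega) (by omega) (by omega)
    obtain ⟨qb, hqb, ⟨hb1, hb2⟩, hb3⟩ := hsep 1 0 (by omega) (by omega) (by omega)
    have hqa' : qa = (0, 1) := by
      have := hbd qa hqa; obtain ⟨a1, a2⟩ := qa; simp at *; omega
    have hqb' : qb = (1, 2) := by
      have := hbd qb hqb; obtain ⟨b1, b2⟩ := qb; simp at *; omega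
    subst hqa'; subst hqb'
    have hmem : (1, 2) ∈ Q.erase (0, 1) :=
      (Multiset.mem_erase_of_ne (by simp)).2 hqb
    have hQ1 : Q = (0, 1) ::ₘ Q.erase (0, 1) := (Multiset.cons_erase hqa).symm
    have hQ2 : Q.erase (0, 1) = (1, 2) ::ₘ (Q.erase (0, 1)).erase (1, 2) :=
      (Multiset.cons_erase hmem).symm
    have hrest : (Q.erase (0, 1)).erase (1, 2) = 0 := by
      rw [← Multiset.card_eq_zero]
      have h1 := congrArg Multiset.card hQ1
      have h2 := congrArg Multiset.card hQ2
      simp [Multiset.card_cons] at h1 h2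
      omega
    rw [hrest] at hQ2
    rw [hQ2] at hQ1
    subst hQ1
    refine ⟨?_, ?_⟩
    · intro q hq
      simp [Multiset.mem_cons] at hq
      rcases hq with h | h <;> simp [h]
    · decide
  | succ m hm ih =>
    intro Q hbd hsep hcard
    -- find q0 = (m, m+1)
    obtain ⟨q0, hq0, ⟨h01, h02⟩, h03⟩ := hsep m (m - 1) (by omega) (by omega) (by omega)
    have hq01 : q0.1 = m := by omega
    have hq02 : q0.2 = m + 1 := by have := hbd q0 hq0; omega
    set fn : ℕ × ℕ → ℕ × ℕ := fun q => (q.1, min q.2 m) with hfn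
    set Q' : Multiset (ℕ × ℕ) := (Q.erase q0).map fn with hQ'
    have hcard' : Multiset.card Q' ≤ m := by
      rw [hQ', Multiset.card_map, Multiset.card_erase_of_mem hq0]
      exact Nat.pred_le_pred hcard
    have hbd' : ∀ q ∈ Q', q.2 ≤ m := by
      intro q hq
      obtain ⟨r, _, hr⟩ := Multiset.mem_map.1 hq
      rw [← hr]; simp [hfn]
    have hsep' : SepQ m Q' := by
      intro e f he hf hef
      obtain ⟨q, hq, ⟨h1, h2⟩, h3⟩ := hsep e f (by omega) (by omega) hef
      have hne : q ≠ q0 := fun hc => by rw [hc] at h1; omega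
      have hq' : q ∈ Q.erase q0 := (Multiset.mem_erase_of_ne hne).2 hq
      refine ⟨fn q, Multiset.mem_map_of_mem fn hq', ⟨?_, ?_⟩, ?_⟩
      · exact h1
      · simp [hfn]; omega
      · simp only [hfn]; omega
    obtain ⟨hsingle', hmap'⟩ := ih Q' hbd' hsep' hcard'
    -- find q1 = (m-1, m)
    obtain ⟨q1, hq1, ⟨h11, h12⟩, h13⟩ := hsep (m - 1) m (by omega) (by omega) (by omega)
    have hq1ne : q1 ≠ q0 := fun hc => by rw [hc, hq01] at h11; omega
    have hq1m : q1 ∈ Q.erase q0 := (Multiset.mem_erase_of_ne hq1ne).2 hq1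
    have hq12 : q1.2 ≤ m := by omega
    have hq1fix : fn q1 = q1 := by
      rw [hfn]; show (q1.1, min q1.2 m) = q1; rw [min_eq_left hq12]
    have hq1single : q1.2 = q1.1 + 1 := by
      have := hsingle' (fn q1) (Multiset.mem_map_of_mem fn hq1m)
      rw [hq1fix] at this; exact this
    have hq1eq : q1 = (m - 1, m) := by
      obtain ⟨a, b⟩ := q1; simp at *; omega
    -- all intervals in erase have second coordinate ≤ m
    have hall : ∀ q ∈ Q.erase q0, q.2 ≤ m := by
      intro q hq
      by_contra hc
      have hb : q.2 = m + 1 := by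
        have := hbd q (Multiset.mem_of_mem_erase hq); omega
      have hfq : fn q = (q.1, m) := by
        rw [hfn]; show (q.1, min q.2 m) = (q.1, m)
        rw [min_eq_right (by omega : m ≤ q.2)]
      have h1 : m = q.1 + 1 := by
        have := hsingle' (fn q) (Multiset.mem_map_of_mem fn hq)
        rw [hfq] at this; exact this
      have hqne : q ≠ q1 := by
        rw [hq1eq]; intro hc2; rw [hc2] at hb; omega
      have hq1m2 : q1 ∈ (Q.erase q0).erase q := (Multiset.mem_erase_of_ne (by
        intro hc2; exact hqne hc2.symm)).2 hq1m
      have hdec : Q.erase q0 = q ::ₘ (Q.erase q0).erase q := (Multiset.cons_erase hq).symm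
      have hmm : Q'.map Prod.fst = q.1 ::ₘ ((Q.erase q0).erase q).map (fun r => (fn r).1) := by
        conv_lhs => rw [hQ', hdec]
        simp only [Multiset.map_cons, Multiset.map_map]
        rfl
      have hq1' : q.1 = m - 1 := by omega
      have hin : (m - 1) ∈ ((Q.erase q0).erase q).map (fun r => (fn r).1) := by
        refine Multiset.mem_map.2 ⟨q1, hq1m2, ?_⟩
        show (fn q1).1 = m - 1
        rw [hq1fix, hq1eq]
      have hnd : (Q'.map Prod.fst).Nodup := by rw [hmap']; exact Multiset.nodup_range m
      rw [hmm, hq1'] at hnd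
      exact (Multiset.nodup_cons.1 hnd).1 hin
    have hQ'eq : Q' = Q.erase q0 := by
      rw [hQ']
      have : (Q.erase q0).map fn = (Q.erase q0).map id := by
        apply Multiset.map_congr rfl
        intro q hq
        rw [hfn]; show (q.1, min q.2 m) = id q
        rw [min_eq_left (hall q hq)]; rfl
      rw [this, Multiset.map_id]
    refine ⟨?_, ?_⟩
    · intro q hq
      by_cases hc : q = q0
      · rw [hc]; omega
      · have : q ∈ Q.erase q0 := (Multiset.mem_erase_of_ne hc).2 hq
        rw [← hQ'eq] at this
        exact hsingle' q this
    · have hQdec : Q = q0 ::ₘ Q.erase q0 := (Multiset.cons_erase hq0).symm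
      rw [hQdec, Multiset.map_cons, hq01, ← hQ'eq, hmap', Multiset.range_succ]

-- single-edge path
def spath (n : ℕ) (hn : 0 < n) (k : ℕ) : GPath (pathGraph n) :=
  if hk : k + 1 < n then
    { a := ⟨k, by omega⟩, b := ⟨k+1, hk⟩,
      walk := Walk.cons (by rw [pathGraph_adj]; left; rfl) Walk.nil,
      isPath := by simp [Walk.cons_isPath_iff, Fin.ext_iff] }
  else
    { a := ⟨0, hn⟩, b := ⟨0, hn⟩, walk := Walk.nil, isPath := Walk.IsPath.nil }

lemma part1 (n : ℕ) (hn : 3 ≤ n) (P : Multiset (GPath (pathGraph n)))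
    (hsep : IsStrongSep (pathGraph n) P) (hcard : Multiset.card P ≤ n - 1) :
    Multiset.card P = n - 1 ∧ (∀ p ∈ P, p.walk.edges.length = 1) ∧
      ∀ e ∈ (pathGraph n).edgeSet, ∃ p ∈ P, e ∈ p.walk.edges := by
  set Q := P.map (fun p => (min p.a.val p.b.val, max p.a.val p.b.val)) with hQ
  have hbd : ∀ q ∈ Q, q.2 ≤ n - 1 := by
    intro q hq; obtain ⟨p, _, rfl⟩ := Multiset.mem_map.1 hq
    have h1 := p.a.isLt; have h2 := p.b.isLt; simp; omega
  have hsepQ : SepQ (n-1) Q := by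
    intro k l hk hl hkl
    have hk' : k + 1 < n := by omega
    have hl' : l + 1 < n := by omega
    have hmemK : s((⟨k, by omega⟩ : Fin n), ⟨k+1, hk'⟩) ∈ (pathGraph n).edgeSet := by
      rw [mem_edgeSet, pathGraph_adj]; left; rfl
    have hmemL : s((⟨l, by omega⟩ : Fin n), ⟨l+1, hl'⟩) ∈ (pathGraph n).edgeSet := by
      rw [mem_edgeSet, pathGraph_adj]; left; rfl
    have hne : s((⟨k, by omega⟩ : Fin n), ⟨k+1, hk'⟩) ≠ s((⟨l, by omega⟩ : Fin n), ⟨l+1, hl'⟩) := by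
      intro hEq
      rw [Sym2.eq_iff] at hEq
      rcases hEq with ⟨h1, h2⟩ | ⟨h1, h2⟩ <;>
        (rw [Fin.mk.injEq] at h1 h2; omega)
    obtain ⟨p, hp, he, hf⟩ := hsep _ _ hmemK hmemL hne
    refine ⟨(min p.a.val p.b.val, max p.a.val p.b.val),
      Multiset.mem_map_of_mem _ hp, ?_, ?_⟩
    · have h := (pg_path_edge_iff p.walk p.isPath k hk').1 he
      exact ⟨h.1, by omega⟩
    · intro hc
      exact hf ((pg_path_edge_iff p.walk p.isPath l hl').2 ⟨hc.1, by omega⟩)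
  obtain ⟨hsingle, hmap⟩ := core_lemma (n-1) (by omega) Q hbd hsepQ
    (by rw [hQ, Multiset.card_map]; exact hcard)
  have hcardP : Multiset.card P = n - 1 := by
    have h := congrArg Multiset.card hmap
    rw [Multiset.card_map, Multiset.card_range, hQ, Multiset.card_map] at h
    exact h
  refine ⟨hcardP, ?_, ?_⟩
  · intro p hp
    have h := hsingle _ (Multiset.mem_map_of_mem
      (fun p => (min p.a.val p.b.val, max p.a.val p.b.val)) hp)
    simp only at h
    rw [pg_path_length p.walk p.isPath]
    omega
  · intro e he
    obtain ⟨k, hk, rfl⟩ := pg_edge_mem_iff.1 he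
    have hkr : k ∈ Multiset.range (n-1) := Multiset.mem_range.2 (by omega)
    rw [← hmap] at hkr
    obtain ⟨q, hqQ, hq1⟩ := Multiset.mem_map.1 hkr
    have h2 := hsingle q hqQ
    obtain ⟨p, hp, hpq⟩ := Multiset.mem_map.1 hqQ
    refine ⟨p, hp, ?_⟩
    apply (pg_path_edge_iff p.walk p.isPath k hk).2
    rw [← hpq] at hq1 h2
    simp only at hq1 h2
    omega

/-- The only strongly separating path system of `P_n` (`n ≥ 3`)
with at most `n − 1` paths is the set of all single-edge paths; in particular
`ssp(P_n) = n − 1`. -/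
theorem stmt7 (n : ℕ) (hn : 3 ≤ n) :
    (∀ P : Multiset (GPath (SimpleGraph.pathGraph n)),
      IsStrongSep (SimpleGraph.pathGraph n) P → Multiset.card P ≤ n - 1 →
        Multiset.card P = n - 1 ∧ (∀ p ∈ P, p.walk.edges.length = 1) ∧
          ∀ e ∈ (SimpleGraph.pathGraph n).edgeSet, ∃ p ∈ P, e ∈ p.walk.edges) ∧
    ssp (SimpleGraph.pathGraph n) = n - 1 := by
  refine ⟨fun P h1 h2 => part1 n hn P h1 h2, ?_⟩
  have hnn : 0 < n := by omega
  have hsep₀ : IsStrongSep (pathGraph n) ((Multiset.range (n-1)).map (spath n hnn)) := by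
    intro e f he hf hne
    obtain ⟨k, hk, rfl⟩ := pg_edge_mem_iff.1 he
    refine ⟨spath n hnn k,
      Multiset.mem_map_of_mem _ (Multiset.mem_range.2 (by omega)), ?_, ?_⟩
    · unfold spath; rw [dif_pos hk]
      simp only [Walk.edges_cons, Walk.edges_nil, List.mem_singleton]
    · unfold spath; rw [dif_pos hk]
      simp only [Walk.edges_cons, Walk.edges_nil, List.mem_singleton]
      intro hc; exact hne hc.symm
  have hmem : (n - 1) ∈ {m | ∃ P : Multiset (GPath (pathGraph n)),
      IsStrongSep (pathGraph n) P ∧ Multiset.card P = m} :=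
    ⟨_, hsep₀, by rw [Multiset.card_map, Multiset.card_range]⟩
  have hlb : ∀ m ∈ {m | ∃ P : Multiset (GPath (pathGraph n)),
      IsStrongSep (pathGraph n) P ∧ Multiset.card P = m}, n - 1 ≤ m := by
    rintro m ⟨P, hP, rfl⟩
    by_contra hcon
    push_neg at hcon
    have := (part1 n hn P hP (le_of_lt hcon)).1
    omega
  exact le_antisymm (Nat.sInf_le hmem) (le_csInf ⟨_, hmem⟩ hlb)
end

section
/- For every k ≥ 2 there is a constant C_k such that for all n, every k-rainbow separating path system of the complete graph K_n has size at least (3/2)(n − C_k); hence r_k(𝒦) ≥ 3/2 for the class 𝒦 of complete graphs. -/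
open SimpleGraph

/-- For every `k ≥ 2` there is a constant `C_k` such that for all
`n`, every `k`-RSPS of `K_n` has size at least `(3/2)(n − C_k)`. -/
theorem stmt15 (k : ℕ) (hk : 2 ≤ k) :
    ∃ C : ℝ, ∀ n : ℕ,
      ∀ P : Multiset (GPath (⊤ : SimpleGraph (Fin n)) × Fin k),
        IsRSPS (⊤ : SimpleGraph (Fin n)) k P →
        (3 / 2) * ((n : ℝ) - C) ≤ (Multiset.card P : ℝ) := by
  classical
  refine ⟨((k : ℝ) + 4) / 2, ?_⟩
  intro n P hP
  by_cases hn : n < 4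
  · have h1 : (n : ℝ) ≤ 3 := by exact_mod_cast Nat.lt_succ_iff.mp hn
    have h2 : (2 : ℝ) ≤ (k : ℝ) := by exact_mod_cast hk
    have h3 : (0 : ℝ) ≤ (Multiset.card P : ℝ) := Nat.cast_nonneg _
    nlinarith
  push_neg at hn
  set E : Finset (Sym2 (Fin n)) := (⊤ : SimpleGraph (Fin n)).edgeFinset with hEdef
  set m := Multiset.card P with hm
  have hn0 : 0 < n := by omega
  let dflt : GPath (⊤ : SimpleGraph (Fin n)) × Fin k :=
    (⟨⟨0, hn0⟩, ⟨0, hn0⟩, Walk.nil, Walk.IsPath.nil⟩, ⟨0, by omega⟩)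
  set cov : Sym2 (Fin n) → Finset (GPath (⊤ : SimpleGraph (Fin n)) × Fin k) :=
    fun e => P.toFinset.filter (fun x => e ∈ x.1.walk.edges) with hcovdef
  have hcov_mem : ∀ e x, x ∈ cov e ↔ x ∈ P ∧ e ∈ x.1.walk.edges := by
    intro e x
    simp [hcovdef, Multiset.mem_toFinset]
  -- edge count of K_n
  have hEcard : E.card = n.choose 2 := by
    rw [hEdef]
    simpa using (SimpleGraph.card_edgeFinset_top_eq_card_choose_two (V := Fin n))
  have hEc2 : 2 * E.card = n * (n - 1) := by
    rw [hEcard, Nat.choose_two_right]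
    have hdvd : 2 ∣ n * (n - 1) := by
      rcases Nat.even_or_odd n with h | h
      · exact Dvd.dvd.mul_right h.two_dvd _
      · have : Even (n - 1) := by rcases h with ⟨r, hr⟩; exact ⟨r, by omega⟩
        exact Dvd.dvd.mul_left this.two_dvd _
    set N := n * (n - 1)
    omega
  have hE1lt : 1 < E.card := by
    have h12 : 4 * 3 ≤ n * (n - 1) := Nat.mul_le_mul (by omega) (by omega)
    omega
  -- every edge is covered
  have hcov1 : ∀ e ∈ E, 1 ≤ (cov e).card := by
    intro e he
    obtain ⟨f, hf, hfe⟩ := Finset.exists_mem_ne hE1lt e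
    obtain ⟨p, hpP, q, hqP, hpq, hep, hfp, hfq, heq⟩ :=
      hP e f (mem_edgeFinset.mp he) (mem_edgeFinset.mp hf) (Ne.symm hfe)
    exact Finset.card_pos.mpr ⟨p, (hcov_mem e p).mpr ⟨hpP, hep⟩⟩
  -- cov card ≤ multiplicity count
  have hDt : ∀ e, (cov e).card ≤ Multiset.countP (fun x => e ∈ x.1.walk.edges) P := by
    intro e
    have h1 : cov e = (P.filter (fun x => e ∈ x.1.walk.edges)).toFinset :=
      (Multiset.toFinset_filter _ _).symm
    rw [h1, Multiset.countP_eq_card_filter]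
    exact Multiset.toFinset_card_le _
  -- path length bound
  have hlen : ∀ x : GPath (⊤ : SimpleGraph (Fin n)) × Fin k,
      x.1.walk.edges.length ≤ n - 1 := by
    intro x
    have h := x.1.isPath.length_lt
    rw [Fintype.card_fin] at h
    rw [Walk.length_edges]
    omega
  -- total coverage bound
  have hsumt : ∀ Q : Multiset (GPath (⊤ : SimpleGraph (Fin n)) × Fin k),
      (∑ e ∈ E, Multiset.countP (fun x => e ∈ x.1.walk.edges) Q)
        ≤ Multiset.card Q * (n - 1) := by
    intro Q
    induction Q using Multiset.induction_on with
    | empty => simp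
    | cons a s ih =>
      simp only [Multiset.countP_cons, Finset.sum_add_distrib, Multiset.card_cons]
      have h2 : (∑ e ∈ E, if e ∈ a.1.walk.edges then 1 else 0) ≤ n - 1 := by
        rw [← Finset.card_filter]
        calc (E.filter (fun e => e ∈ a.1.walk.edges)).card
            ≤ a.1.walk.edges.toFinset.card := by
              apply Finset.card_le_card
              intro e he
              exact List.mem_toFinset.mpr (Finset.mem_filter.mp he).2
          _ ≤ a.1.walk.edges.length := List.toFinset_card_le _
          _ ≤ n - 1 := hlen a
      rw [Nat.succ_mul]
      exact Nat.add_le_add ih h2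
  
  -- uniqueness selector for singleton covers
  let g : Sym2 (Fin n) → GPath (⊤ : SimpleGraph (Fin n)) × Fin k :=
    fun e => if h : (cov e).Nonempty then h.choose else dflt
  have hg_mem : ∀ e, (cov e).Nonempty → g e ∈ cov e := by
    intro e h
    simp only [g, dif_pos h]
    exact h.choose_spec
  have hg_uniq : ∀ e, (cov e).card = 1 → ∀ y ∈ cov e, y = g e := by
    intro e h y hy
    exact Finset.card_le_one.mp (le_of_eq h) y hy (g e) (hg_mem e ⟨y, hy⟩)
  -- few singly-covered edges
  have hE1bnd : (E.filter (fun e => (cov e).card = 1)).card ≤ m := by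
    calc (E.filter (fun e => (cov e).card = 1)).card ≤ P.toFinset.card := by
          apply Finset.card_le_card_of_injOn g
          · intro e he
            rw [Finset.mem_coe, Finset.mem_filter] at he
            have hne : (cov e).Nonempty := Finset.card_pos.mp (by omega)
            exact Finset.mem_of_mem_filter _ (hg_mem e hne)
          · intro e he f hf hgef
            simp only [Finset.coe_filter, Set.mem_setOf_eq] at he hf
            obtain ⟨heE, he1⟩ := he
            obtain ⟨hfE, hf1⟩ := hf
            by_contra hne
            obtain ⟨p, hpP, q, hqP, hpq, hep, hfp, hfq, heq⟩ :=
              hP e f (mem_edgeFinset.mp heE) (mem_edgeFinset.mp hfE) hne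
            have hp : p = g e := hg_uniq e he1 p ((hcov_mem e p).mpr ⟨hpP, hep⟩)
            have hq : q = g f := hg_uniq f hf1 q ((hcov_mem f q).mpr ⟨hqP, hfq⟩)
            rw [hgef] at hp
            exact heq (by rw [hq, ← hp]; exact hep)
      _ ≤ m := Multiset.toFinset_card_le P
  -- the "other coverer" for doubly-covered edges
  let oth : (GPath (⊤ : SimpleGraph (Fin n)) × Fin k) → Sym2 (Fin n) →
      GPath (⊤ : SimpleGraph (Fin n)) × Fin k :=
    fun x e => if h : ((cov e).erase x).Nonempty then h.choose else dflt
  have hoth : ∀ x e, (cov e).card = 2 → x ∈ cov e →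
      oth x e ∈ cov e ∧ oth x e ≠ x ∧ ∀ z ∈ cov e, z = x ∨ z = oth x e := by
    intro x e h2 hx
    have hc : ((cov e).erase x).card = 1 := by
      rw [Finset.card_erase_of_mem hx, h2]
    have hne : ((cov e).erase x).Nonempty := Finset.card_pos.mp (by omega)
    have hmem : oth x e ∈ (cov e).erase x := by
      simp only [oth, dif_pos hne]
      exact hne.choose_spec
    obtain ⟨hyx, hycov⟩ := Finset.mem_erase.mp hmem
    refine ⟨hycov, hyx, ?_⟩
    have hsub : ({x, oth x e} : Finset _) ⊆ cov e := by
      intro z hz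
      rcases Finset.mem_insert.mp hz with h | h
      · rwa [h]
      · rw [Finset.mem_singleton.mp h]; exact hycov
    have heq : ({x, oth x e} : Finset _) = cov e :=
      Finset.eq_of_subset_of_card_le hsub (by rw [Finset.card_pair (Ne.symm hyx), h2])
    intro z hz
    rw [← heq] at hz
    simpa using hz
  -- per-path bound: at most k doubly-covered edges on any given path
  have hpp : ∀ x, x ∈ P.toFinset →
      ((E.filter (fun e => (cov e).card = 2)).filter (fun e => x ∈ cov e)).card ≤ k := by
    intro x hxP
    have hinj : ((E.filter (fun e => (cov e).card = 2)).filter (fun e => x ∈ cov e)).card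
        ≤ (Finset.univ : Finset (Fin k)).card := by
      apply Finset.card_le_card_of_injOn (fun e => (oth x e).2)
      · intro e _
        exact Finset.mem_univ _
      · intro e he f hf hcol
        simp only [Finset.coe_filter, Set.mem_setOf_eq, Finset.mem_filter] at he hf
        obtain ⟨⟨heE, he2⟩, hxe⟩ := he
        obtain ⟨⟨hfE, hf2⟩, hxf⟩ := hf
        by_contra hne
        obtain ⟨hye, hyxe, hcove⟩ := hoth x e he2 hxe
        obtain ⟨hyf, hyxf, hcovf⟩ := hoth x f hf2 hxf
        obtain ⟨p, hpP, q, hqP, hpq, hep, hfp, hfq, heq⟩ :=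
          hP e f (mem_edgeFinset.mp heE) (mem_edgeFinset.mp hfE) hne
        have hfx : f ∈ x.1.walk.edges := ((hcov_mem f x).mp hxf).2
        have hex : e ∈ x.1.walk.edges := ((hcov_mem e x).mp hxe).2
        have hp : p = oth x e := by
          rcases hcove p ((hcov_mem e p).mpr ⟨hpP, hep⟩) with h | h
          · exact absurd (show f ∈ p.1.walk.edges by rw [h]; exact hfx) hfp
          · exact h
        have hq : q = oth x f := by
          rcases hcovf q ((hcov_mem f q).mpr ⟨hqP, hfq⟩) with h | h
          · exact absurd (show e ∈ q.1.walk.edges by rw [h]; exact hex) heq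
          · exact h
        exact hpq (by rw [hp, hq]; simpa using hcol)
    simpa using hinj
  -- double counting the doubly-covered edges
  have hE2bnd : 2 * (E.filter (fun e => (cov e).card = 2)).card ≤ k * m := by
    set E2 := E.filter (fun e => (cov e).card = 2) with hE2def
    have step1 : 2 * E2.card = ∑ e ∈ E2, (cov e).card := by
      rw [Finset.sum_congr rfl (fun e he => (Finset.mem_filter.mp he).2),
        Finset.sum_const, smul_eq_mul, mul_comm]
    have step3 : ∑ e ∈ E2, (cov e).card
        = ∑ x ∈ P.toFinset, ∑ e ∈ E2, if e ∈ x.1.walk.edges then 1 else 0 := by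
      rw [Finset.sum_congr rfl (fun e _ => Finset.card_filter _ _), Finset.sum_comm]
    have step4 : ∀ x ∈ P.toFinset,
        (∑ e ∈ E2, if e ∈ x.1.walk.edges then 1 else 0) ≤ k := by
      intro x hx
      rw [← Finset.card_filter]
      have hfe : E2.filter (fun e => e ∈ x.1.walk.edges) = E2.filter (fun e => x ∈ cov e) := by
        apply Finset.filter_congr
        intro e _
        constructor
        · intro h
          exact (hcov_mem e x).mpr ⟨Multiset.mem_toFinset.mp hx, h⟩
        · intro h
          exact ((hcov_mem e x).mp h).2
      rw [hfe]
      exact hpp x hx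
    calc 2 * E2.card = ∑ x ∈ P.toFinset, ∑ e ∈ E2, if e ∈ x.1.walk.edges then 1 else 0 := by
          rw [step1, step3]
      _ ≤ ∑ _x ∈ P.toFinset, k := Finset.sum_le_sum step4
      _ = P.toFinset.card * k := by rw [Finset.sum_const, smul_eq_mul]
      _ ≤ m * k := Nat.mul_le_mul_right k (Multiset.toFinset_card_le P)
      _ = k * m := Nat.mul_comm m k
  -- pointwise lower bound and summation
  have hmain : ∀ e ∈ E, 3 ≤ Multiset.countP (fun x => e ∈ x.1.walk.edges) P
      + (if (cov e).card = 1 then 2 else 0) + (if (cov e).card = 2 then 1 else 0) := by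
    intro e he
    have h1 := hcov1 e he
    have h2 := hDt e
    split_ifs <;> omega
  have hsum3 : 3 * E.card ≤ m * (n - 1)
      + 2 * (E.filter (fun e => (cov e).card = 1)).card
      + (E.filter (fun e => (cov e).card = 2)).card := by
    have hb := Finset.sum_le_sum hmain
    rw [Finset.sum_const, smul_eq_mul, mul_comm] at hb
    simp only [Finset.sum_add_distrib] at hb
    have hi1 : (∑ e ∈ E, if (cov e).card = 1 then 2 else 0)
        = 2 * (E.filter (fun e => (cov e).card = 1)).card := by
      rw [← Finset.sum_filter, Finset.sum_const, smul_eq_mul, mul_comm]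
    have hi2 : (∑ e ∈ E, if (cov e).card = 2 then 1 else 0)
        = (E.filter (fun e => (cov e).card = 2)).card := by
      rw [← Finset.sum_filter, Finset.sum_const, smul_eq_mul, mul_one]
    rw [hi1, hi2] at hb
    have ht := hsumt P
    rw [← hm] at ht
    omega
  -- assemble the natural-number inequality
  have hfinal : 3 * (n * (n - 1)) ≤ 2 * (m * (n - 1)) + 4 * m + k * m := by
    calc 3 * (n * (n - 1)) = 2 * (3 * E.card) := by rw [← hEc2]; ring
      _ ≤ 2 * (m * (n - 1)
            + 2 * (E.filter (fun e => (cov e).card = 1)).card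
            + (E.filter (fun e => (cov e).card = 2)).card) := Nat.mul_le_mul_left 2 hsum3
      _ = 2 * (m * (n - 1)) + 4 * (E.filter (fun e => (cov e).card = 1)).card
            + 2 * (E.filter (fun e => (cov e).card = 2)).card := by ring
      _ ≤ 2 * (m * (n - 1)) + 4 * m + k * m :=
          Nat.add_le_add (Nat.add_le_add le_rfl (Nat.mul_le_mul_left 4 hE1bnd)) hE2bnd
  -- pass to the reals
  obtain ⟨p, hp⟩ : ∃ p, n = p + 1 := ⟨n - 1, by omega⟩
  have hp1 : n - 1 = p := by omega
  rw [hp1] at hfinal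
  have hpR : (p : ℝ) = (n : ℝ) - 1 := by
    have : (n : ℝ) = (p : ℝ) + 1 := by exact_mod_cast hp
    linarith
  have hR : 3 * ((n : ℝ) * (p : ℝ)) ≤ 2 * ((m : ℝ) * (p : ℝ)) + 4 * (m : ℝ) + (k : ℝ) * (m : ℝ) := by
    exact_mod_cast hfinal
  rw [hpR] at hR
  have hk' : (2 : ℝ) ≤ (k : ℝ) := by exact_mod_cast hk
  have hn' : (4 : ℝ) ≤ (n : ℝ) := by exact_mod_cast hn
  have hpos : (0 : ℝ) < 2 * (n : ℝ) + 2 + (k : ℝ) := by linarith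
  have hR2 : 3 * ((n : ℝ) * ((n : ℝ) - 1)) ≤ (m : ℝ) * (2 * (n : ℝ) + 2 + (k : ℝ)) := by
    nlinarith [hR]
  have key : (3 / 2) * ((n : ℝ) - ((k : ℝ) + 4) / 2) * (2 * (n : ℝ) + 2 + (k : ℝ))
      ≤ 3 * ((n : ℝ) * ((n : ℝ) - 1)) := by nlinarith [hk', hn']
  have := le_of_mul_le_mul_right (le_trans key hR2) hpos
  rw [hm] at this
  exact this
end
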